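/- arXiv:1308.5993 — 10 statements merged into one kernel-verified Lean document; each statement's English description precedes it below -/
import Mathlib

section
/- Let m ≥ 2, s ≥ 1 be integers, let d = mq + r with 0 ≤ r ≤ m−1, and suppose x_1, …, x_m are nonnegative integers with Σ x_k = d. Then d(ms − d) − m·Σ_{k=1}^m x_k(s − x_k) ≥ r(m − r). -/
/-!
Writing `d = Σ xₖ = mq + r`, the difference between the two sides is exactly
`m · Σₖ (xₖ - q)(xₖ - q - 1)`, and each summand is a product of two consecutive integers,
hence nonnegative.
-/

open Finset

theorem Int.mul_sub_one_nonneg (n : ℤ) : 0 ≤ n * (n - 1) := by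
  rcases le_or_gt n 0 with hn | hn
  · exact mul_nonneg_of_nonpos_of_nonpos hn (by omega)
  · exact mul_nonneg hn.le (by omega)

theorem sum_mul_sub_sub_one_eq {ι R : Type*} [CommRing R] (t : Finset ι) (x : ι → R) (q : R) :
    ∑ k ∈ t, (x k - q) * (x k - q - 1) =
      ∑ k ∈ t, x k ^ 2 - (2 * q + 1) * ∑ k ∈ t, x k + #t * (q * (q + 1)) := by
  rw [mul_sum, ← nsmul_eq_mul, ← sum_const, ← sum_sub_distrib, ← sum_add_distrib]
  exact sum_congr rfl fun k _ => by ring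

theorem flow_sub_remainder_eq {ι R : Type*} [Fintype ι] [CommRing R] (x : ι → R) (s q r : R)
    (hsum : ∑ k, x k = Fintype.card ι * q + r) :
    (∑ k, x k) * (Fintype.card ι * s - ∑ k, x k) - Fintype.card ι * ∑ k, x k * (s - x k) -
        r * (Fintype.card ι - r) =
      Fintype.card ι * ∑ k, (x k - q) * (x k - q - 1) := by
  have hflow : ∑ k, x k * (s - x k) = s * ∑ k, x k - ∑ k, x k ^ 2 := by
    rw [mul_sum, ← sum_sub_distrib]
    exact sum_congr rfl fun k _ => by ring
  rw [hflow, sum_mul_sub_sub_one_eq, card_univ, hsum]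
  ring

theorem flow_ge_remainder_product_general (m s q r d : ℕ) (hd : d = m * q + r)
    (x : Fin m → ℕ) (hsum : ∑ k, x k = d) :
    (d : ℤ) * ((m : ℤ) * (s : ℤ) - (d : ℤ)) -
        (m : ℤ) * ∑ k, (x k : ℤ) * ((s : ℤ) - (x k : ℤ)) ≥
      (r : ℤ) * ((m : ℤ) - (r : ℤ)) := by
  have hsum' : ∑ k, (x k : ℤ) = (Fintype.card (Fin m) : ℤ) * q + r := by
    rw [Fintype.card_fin]; exact_mod_cast hsum.trans hd
  have key := flow_sub_remainder_eq (fun k => (x k : ℤ)) s q r hsum'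
  have hnonneg : 0 ≤ (m : ℤ) * ∑ k, ((x k : ℤ) - q) * ((x k : ℤ) - q - 1) :=
    mul_nonneg (Int.natCast_nonneg m) (sum_nonneg fun k _ => Int.mul_sub_one_nonneg _)
  rw [Fintype.card_fin] at key
  rw [← hsum]
  push_cast
  linarith

/-- The key inequality of the standard construction: for `d = mq + r` with `0 ≤ r ≤ m-1` and
nonnegative integers `x_1, …, x_m` with `Σ x_k = d`, one has
`d(ms - d) - m Σ x_k (s - x_k) ≥ r (m - r)`. -/
theorem flow_ge_remainder_product (m s q r d : ℕ) (hm : 2 ≤ m) (hs : 1 ≤ s)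
    (hr : r ≤ m - 1) (hd : d = m * q + r)
    (x : Fin m → ℕ) (hsum : ∑ k, x k = d) :
    (d : ℤ) * ((m : ℤ) * (s : ℤ) - (d : ℤ)) -
        (m : ℤ) * ∑ k, (x k : ℤ) * ((s : ℤ) - (x k : ℤ)) ≥
      (r : ℤ) * ((m : ℤ) - (r : ℤ)) :=
  flow_ge_remainder_product_general m s q r d hd x hsum
end

section
/- Let m ≥ 2, s ≥ 1, d = mq + r with 0 ≤ r ≤ m−1, and let x_1,…,x_m be nonnegative integers with Σ x_k = d. Then d(ms − d) − m·Σ x_k(s − x_k) = r(m−r) if and only if exactly r of the x_k equal q+1 and the remaining m−r equal q. -/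
/-!
Writing `d = mq + r`, the defect `d(ms - d) - m Σ x_k (s - x_k) - r(m - r)` is identically
`m Σ (x_k - q)(x_k - q - 1)`. Each summand is a product of two consecutive integers,
hence nonnegative, and vanishes exactly when `x_k ∈ {q, q + 1}`. Once every `x_k` is `q` or
`q + 1`, the constraint `Σ x_k = mq + r` says that exactly `r` of them are `q + 1`.
-/

open Finset

theorem flow_sub_eq_card_mul_sum_sub_mul_sub_sub_one {ι R : Type*} [Fintype ι] [CommRing R]
    (x : ι → R) (q r s : R)
    (hsum : ∑ i, x i = Fintype.card ι * q + r) :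
    (∑ i, x i) * (Fintype.card ι * s - ∑ i, x i) - Fintype.card ι * ∑ i, x i * (s - x i)
        - r * (Fintype.card ι - r) =
      Fintype.card ι * ∑ i, (x i - q) * (x i - q - 1) := by
  have hflow : ∑ i, x i * (s - x i) = s * ∑ i, x i - ∑ i, x i ^ 2 := by
    rw [mul_sum, ← sum_sub_distrib]
    exact sum_congr rfl fun i _ => by ring
  have hgap : ∑ i, (x i - q) * (x i - q - 1) =
      ∑ i, x i ^ 2 - (2 * q + 1) * ∑ i, x i + Fintype.card ι * (q * (q + 1)) := by
    rw [mul_sum, ← sum_sub_distrib, ← nsmul_eq_mul, ← card_univ, ← sum_const, ← sum_add_distrib]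
    exact sum_congr rfl fun i _ => by ring
  rw [hflow, hgap, hsum]
  ring

theorem sum_sub_mul_sub_sub_one_eq_zero_iff {ι : Type*} [Fintype ι] (x : ι → ℕ) (q : ℕ) :
    ∑ i, ((x i : ℤ) - q) * ((x i : ℤ) - q - 1) = 0 ↔ ∀ i, x i = q ∨ x i = q + 1 := by
  rw [sum_eq_zero_iff_of_nonneg fun i _ => Int.mul_sub_one_nonneg _]
  refine forall_congr' fun i => ?_
  rw [mul_eq_zero, sub_eq_zero, sub_eq_zero]
  simp only [mem_univ, true_implies]
  omega

theorem sum_eq_card_mul_add_card_filter_succ {ι : Type*} [Fintype ι] {x : ι → ℕ} {q : ℕ}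
    (hx : ∀ i, x i = q ∨ x i = q + 1) :
    ∑ i, x i = Fintype.card ι * q + #{i | x i = q + 1} := by
  have hsplit : ∀ i, x i = q + if x i = q + 1 then 1 else 0 := fun i => by
    rcases hx i with h | h <;> simp [h]
  rw [sum_congr rfl fun i _ => hsplit i, sum_add_distrib, sum_boole, sum_const, card_univ,
    smul_eq_mul, Nat.cast_id]

theorem card_filter_eq_iff_forall_eq_or_eq_succ {ι : Type*} [Fintype ι] (x : ι → ℕ) (q r : ℕ)
    (hsum : ∑ i, x i = Fintype.card ι * q + r) :
    (#{i | x i = q + 1} = r ∧ #{i | x i = q} = Fintype.card ι - r) ↔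
      ∀ i, x i = q ∨ x i = q + 1 := by
  classical
  have hcover : (∀ i, x i = q ∨ x i = q + 1) ↔
      #{i | x i = q + 1} + #{i | x i = q} = Fintype.card ι := by
    rw [← card_union_of_disjoint (disjoint_filter.2 fun i _ h => by omega), ← filter_or,
      ← card_univ, card_filter_eq_iff]
    simp only [mem_univ, true_implies, or_comm]
  have hle : #{i | x i = q + 1} ≤ Fintype.card ι := card_filter_le _ _
  constructor
  · rintro ⟨hA, hB⟩
    exact hcover.2 (by omega)
  · intro hx
    have hA := sum_eq_card_mul_add_card_filter_succ hx
    have hcard := hcover.1 hx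
    omega

theorem flow_eq_iff_balanced_general (m s q r d : ℕ) (hm : 2 ≤ m)
    (hd : d = m * q + r)
    (x : Fin m → ℕ) (hsum : ∑ k, x k = d) :
    (d : ℤ) * ((m : ℤ) * (s : ℤ) - (d : ℤ)) -
        (m : ℤ) * ∑ k, (x k : ℤ) * ((s : ℤ) - (x k : ℤ)) =
      (r : ℤ) * ((m : ℤ) - (r : ℤ))
    ↔ ((univ.filter (fun k => x k = q + 1)).card = r ∧
        (univ.filter (fun k => x k = q)).card = m - r) := by
  have hsum' : ∑ k, x k = Fintype.card (Fin m) * q + r := by rw [Fintype.card_fin, hsum, hd]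
  have hsumZ : ∑ k, (x k : ℤ) = (d : ℤ) := by exact_mod_cast hsum
  have hgap := flow_sub_eq_card_mul_sum_sub_mul_sub_sub_one (fun k => (x k : ℤ)) q r s
    (by exact_mod_cast hsum')
  simp only [Fintype.card_fin, hsumZ] at hgap
  have hbalanced := card_filter_eq_iff_forall_eq_or_eq_succ x q r hsum'
  rw [Fintype.card_fin] at hbalanced
  rw [hbalanced, ← sum_sub_mul_sub_sub_one_eq_zero_iff, ← sub_eq_zero, hgap, mul_eq_zero,
    or_iff_right (by omega)]

/-- Equality case of the key inequality of the standard construction: for `d = mq + r` with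
`0 ≤ r ≤ m-1` and nonnegative integers `x_1, …, x_m` with `Σ x_k = d`, one has
`d(ms - d) - m Σ x_k (s - x_k) = r(m - r)` if and only if exactly `r` of the `x_k` equal
`q + 1` and the remaining `m - r` equal `q` (the balanced case). -/
theorem flow_eq_iff_balanced (m s q r d : ℕ) (hm : 2 ≤ m) (hs : 1 ≤ s)
    (hr : r ≤ m - 1) (hd : d = m * q + r)
    (x : Fin m → ℕ) (hsum : ∑ k, x k = d) :
    (d : ℤ) * ((m : ℤ) * (s : ℤ) - (d : ℤ)) -
        (m : ℤ) * ∑ k, (x k : ℤ) * ((s : ℤ) - (x k : ℤ)) =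
      (r : ℤ) * ((m : ℤ) - (r : ℤ))
    ↔ ((univ.filter (fun k => x k = q + 1)).card = r ∧
        (univ.filter (fun k => x k = q)).card = m - r) :=
  flow_eq_iff_balanced_general m s q r d hm hd x hsum
end

section
/- Let m ≥ 2, s ≥ 1, d = mq + r with 0 ≤ r ≤ m−1, and let x_1,…,x_m be nonnegative integers with Σ x_k = d and x_k ≤ s for all k. If the tuple (x_1,…,x_m) is not balanced (i.e., it is not the case that r of the x_k equal q+1 and m−r equal q), then d(ms − d) − m·Σ x_k(s − x_k) ≥ 2m + r(m − r). -/
/-!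
Writing `y_k = x_k - q`, the flow equals `m Σ x_k² - d² = m Σ y_k² - r²`, since
`m Σ f² - (Σ f)²` is invariant under translating all `f_k` by a constant, and `Σ y_k = r`.
Every integer satisfies `y ≤ y²`, with `y + 2 ≤ y²` unless `y ∈ {0, 1}` (this is the parity
observation: `y² - y` is even). An unbalanced tuple has some `y_k ∉ {0, 1}`, because a tuple with
values in `{q, q + 1}` and sum `mq + r` has exactly `r` entries `q + 1`. Hence `Σ y_k² ≥ r + 2`.
-/

open Finset

theorem card_filter_eq_of_forall_eq_or_eq_succ {ι : Type*} [Fintype ι] {x : ι → ℕ} {q r : ℕ}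
    (hx : ∀ k, x k = q ∨ x k = q + 1) (hsum : ∑ k, x k = Fintype.card ι * q + r) :
    #{k | x k = q + 1} = r ∧ #{k | x k = q} = Fintype.card ι - r := by
  have hsplit : ∑ k, x k = ∑ k, (q + if x k = q + 1 then 1 else 0) :=
    sum_congr rfl fun k _ => by rcases hx k with h | h <;> simp [h]
  have hsucc : #{k | x k = q + 1} = r := by
    rw [hsplit, sum_add_distrib, sum_const, sum_boole, card_univ, smul_eq_mul, mul_comm] at hsum
    simpa using hsum
  have hcompl : #{k | ¬x k = q + 1} = #{k | x k = q} :=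
    congr_arg card <| filter_congr fun k _ => by rcases hx k with h | h <;> simp [h]
  refine ⟨hsucc, ?_⟩
  have := card_filter_add_card_filter_not (s := univ) (fun k => x k = q + 1)
  rw [card_univ] at this
  omega

theorem card_mul_sum_sq_sub_sq_sum_sub_const {ι R : Type*} [Fintype ι] [CommRing R]
    (f : ι → R) (c : R) :
    Fintype.card ι * ∑ k, (f k - c) ^ 2 - (∑ k, (f k - c)) ^ 2 =
      Fintype.card ι * ∑ k, f k ^ 2 - (∑ k, f k) ^ 2 := by
  simp only [sub_sq, sum_add_distrib, sum_sub_distrib, ← mul_sum, ← sum_mul, sum_const,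
    card_univ, nsmul_eq_mul]
  ring

theorem Int.add_two_le_sq (y : ℤ) (h₀ : y ≠ 0) (h₁ : y ≠ 1) : y + 2 ≤ y ^ 2 := by
  rcases lt_or_gt_of_ne h₀ with h | h
  · nlinarith
  · have : 2 ≤ y := by omega
    nlinarith

theorem Finset.sum_add_two_le_sum_sq {ι : Type*} {s : Finset ι} {y : ι → ℤ} {k₀ : ι}
    (hk₀ : k₀ ∈ s) (h₀ : y k₀ ≠ 0) (h₁ : y k₀ ≠ 1) : ∑ k ∈ s, y k + 2 ≤ ∑ k ∈ s, y k ^ 2 := by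
  have hle : ∀ k ∈ s, 0 ≤ y k ^ 2 - y k := fun k _ => sub_nonneg.2 (Int.le_self_sq _)
  have := single_le_sum hle hk₀
  rw [sum_sub_distrib] at this
  linarith [Int.add_two_le_sq _ h₀ h₁]

theorem flow_ge_of_not_balanced_general (m s q r d : ℕ) (hd : d = m * q + r)
    (x : Fin m → ℕ) (hsum : ∑ k, x k = d)
    (hnb : ¬ ((univ.filter (fun k => x k = q + 1)).card = r ∧
        (univ.filter (fun k => x k = q)).card = m - r)) :
    (d : ℤ) * ((m : ℤ) * (s : ℤ) - (d : ℤ)) -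
        (m : ℤ) * ∑ k, (x k : ℤ) * ((s : ℤ) - (x k : ℤ)) ≥
      2 * (m : ℤ) + (r : ℤ) * ((m : ℤ) - (r : ℤ)) := by
  obtain ⟨k₀, hq, hq₁⟩ : ∃ k, x k ≠ q ∧ x k ≠ q + 1 := by
    by_contra! h
    refine hnb ?_
    simpa using card_filter_eq_of_forall_eq_or_eq_succ (fun k => (em _).imp_right (h k))
      (by simpa [hd] using hsum)
  have hsumℤ : ∑ k, (x k : ℤ) = d := by exact_mod_cast hsum
  have hshift : ∑ k, ((x k : ℤ) - q) = r := by
    simp [sum_sub_distrib, hsumℤ, hd]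
  have hflow : (d : ℤ) * (m * s - d) - m * ∑ k, (x k : ℤ) * (s - x k) =
      m * ∑ k, ((x k : ℤ) - q) ^ 2 - r ^ 2 := by
    have := card_mul_sum_sq_sub_sq_sum_sub_const (fun k => (x k : ℤ)) q
    simp only [Fintype.card_fin, hshift, hsumℤ] at this
    rw [this, ← hsumℤ]
    simp only [mul_sub, sum_sub_distrib, ← sum_mul, sq]
    ring
  have hsq : (r : ℤ) + 2 ≤ ∑ k, ((x k : ℤ) - q) ^ 2 :=
    hshift ▸ sum_add_two_le_sum_sq (mem_univ k₀) (by omega) (by omega)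
  rw [ge_iff_le, hflow]
  nlinarith

/-- If the tuple `(x_1, …, x_m)` (nonnegative integers with `Σ x_k = d = mq + r`, each `x_k ≤ s`)
is not balanced, then `d(ms - d) - m Σ x_k (s - x_k) ≥ 2m + r(m - r)`. -/
theorem flow_ge_of_not_balanced (m s q r d : ℕ) (hm : 2 ≤ m) (hs : 1 ≤ s)
    (hr : r ≤ m - 1) (hd : d = m * q + r)
    (x : Fin m → ℕ) (hsum : ∑ k, x k = d) (hx : ∀ k, x k ≤ s)
    (hnb : ¬ ((univ.filter (fun k => x k = q + 1)).card = r ∧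
        (univ.filter (fun k => x k = q)).card = m - r)) :
    (d : ℤ) * ((m : ℤ) * (s : ℤ) - (d : ℤ)) -
        (m : ℤ) * ∑ k, (x k : ℤ) * ((s : ℤ) - (x k : ℤ)) ≥
      2 * (m : ℤ) + (r : ℤ) * ((m : ℤ) - (r : ℤ)) :=
  flow_ge_of_not_balanced_general m s q r d hd x hsum hnb
end

section
/- Let m ≥ 2 and d_1, …, d_n be integers with 1 ≤ d_i ≤ m−1 and m | Σ d_i. Then there exists a rational-valued weighting w of the complete graph on [n] such that the flow through each vertex i equals d_i(m − d_i), and the flow across each proper partition I ⊔ J = [n] (meaning |I|, |J| ≥ 2) is at least ⟨d(I)⟩_m · ⟨d(J)⟩_m, where d(I) = Σ_{i∈I} d_i and ⟨a⟩_m denotes the representative of a mod m in {0,…,m−1}. -/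
/-!
Lay the blocks `[P_i, P_i + d_i)` of lengths `d_i` consecutively on `[0, Σ d_i)` and let
`R_i ⊆ ℤ/m` be the residues of the `i`-th block. Since `d_i ≤ m`, `|R_i| = d_i`, and since
`Σ d_i = k m`, every residue lies in exactly `k` of the `R_i`. Put `w_ij = d_i d_j - m |R_i ∩ R_j|`.
Double counting gives the flow `d_i (m - d_i)` through each vertex, and the flow across `I ⊔ J`
equals `m Σ_θ G_θ² - (Σ_θ G_θ)²`, where `G_θ` counts the `i ∈ I` with `θ ∈ R_i`. For integers
whose sum is `a = q m + r` this is at least `r (m - r)` (spread them as evenly as possible), and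
`r (m - r) = ⟨d(I)⟩_m ⟨d(J)⟩_m` because `m ∣ d(I) + d(J)`.
-/

open Finset

theorem Int.sq_sum_add_emod_mul_sub_le_card_mul_sum_sq {α : Type*} (s : Finset α) (x : α → ℤ) :
    (∑ i ∈ s, x i) ^ 2 + (∑ i ∈ s, x i) % #s * (#s - (∑ i ∈ s, x i) % #s) ≤
      #s * ∑ i ∈ s, x i ^ 2 := by
  set a := ∑ i ∈ s, x i
  set q := a / #s
  have hx : ∀ i ∈ s, (2 * q + 1) * x i - q * (q + 1) ≤ x i ^ 2 := fun i _ => by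
    have : 0 ≤ (x i - q) * (x i - q - 1) := by
      rcases le_or_gt (x i) q with h | h <;> nlinarith
    linarith
  have hsum := sum_le_sum hx
  rw [sum_sub_distrib, ← mul_sum, sum_const, nsmul_eq_mul] at hsum
  have hdiv : a = #s * q + a % #s := (Int.mul_ediv_add_emod a #s).symm
  linear_combination mul_le_mul_of_nonneg_left hsum (Nat.cast_nonneg #s) +
    (a - #s * q - #s + a % #s) * hdiv

theorem Int.emod_mul_emod_eq_of_dvd_add {m : ℕ} {a b : ℤ} (h : (m : ℤ) ∣ a + b) :
    a % m * (b % m) = a % m * (m - a % m) := by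
  obtain ⟨k, hk⟩ := h
  obtain rfl : b = -a + m * k := by linarith
  rw [Int.add_mul_emod_self_left, Int.neg_emod, Int.natAbs_natCast]
  split_ifs with hdvd
  · simp [Int.emod_eq_zero_of_dvd hdvd]
  · rfl

section Overlap

variable {ι α : Type*} [DecidableEq α] (R : ι → Finset α)

theorem sum_card_inter_eq_sum_card_filter_mem (A : Finset α) (s : Finset ι) :
    ∑ i ∈ s, #(A ∩ R i) = ∑ θ ∈ A, #{i ∈ s | θ ∈ R i} := by
  simp only [← filter_mem_eq_inter, card_filter]
  exact sum_comm

theorem sum_card_inter_of_cover [Fintype ι] {c : ℕ} (hR : ∀ θ, #{i | θ ∈ R i} = c)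
    (A : Finset α) : ∑ i, #(A ∩ R i) = #A * c := by
  rw [sum_card_inter_eq_sum_card_filter_mem, sum_congr rfl fun θ _ => hR θ, sum_const, smul_eq_mul]

variable [Fintype α]

theorem sum_card_eq_sum_card_filter_mem (s : Finset ι) :
    ∑ i ∈ s, #(R i) = ∑ θ, #{i ∈ s | θ ∈ R i} := by
  simpa using sum_card_inter_eq_sum_card_filter_mem R univ s

theorem sum_sum_card_inter_eq (s t : Finset ι) :
    ∑ i ∈ s, ∑ j ∈ t, #(R i ∩ R j) = ∑ θ, #{i ∈ s | θ ∈ R i} * #{j ∈ t | θ ∈ R j} := by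
  have h (i j : ι) :
      #(R i ∩ R j) = ∑ θ, (if θ ∈ R i then 1 else 0) * (if θ ∈ R j then 1 else 0) := by
    simp [← ite_and, ← mem_inter, inter_comm]
  simp only [h, card_filter, sum_mul_sum]
  exact (sum_comm.trans (sum_congr rfl fun _ _ => sum_comm)).symm

variable [DecidableEq ι]

def overlapWeight (i j : ι) : ℤ :=
  if i = j then 0 else #(R i) * #(R j) - Fintype.card α * #(R i ∩ R j)

theorem overlapWeight_comm (i j : ι) : overlapWeight R i j = overlapWeight R j i := by
  simp only [overlapWeight, eq_comm (a := i), mul_comm (#(R i) : ℤ), inter_comm (R i)]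

theorem overlapWeight_self (i : ι) : overlapWeight R i i = 0 := if_pos rfl

theorem overlapWeight_of_ne {i j : ι} (h : i ≠ j) :
    overlapWeight R i j = #(R i) * #(R j) - Fintype.card α * #(R i ∩ R j) := if_neg h

variable [Fintype ι] {c : ℕ}

theorem sum_overlapWeight (hR : ∀ θ, #{i | θ ∈ R i} = c) (i : ι) :
    ∑ j, overlapWeight R i j = #(R i) * (Fintype.card α - #(R i)) := by
  have hcard : ∑ j, #(R j) = Fintype.card α * c := by
    simpa using sum_card_inter_of_cover R hR univ
  have hinter : ∑ j, #(R i ∩ R j) = #(R i) * c := sum_card_inter_of_cover R hR (R i)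
  have hoff : ∑ j, ((#(R i) : ℤ) * #(R j) - Fintype.card α * #(R i ∩ R j)) = 0 := by
    rw [sum_sub_distrib, ← mul_sum, ← mul_sum, ← Nat.cast_sum, ← Nat.cast_sum, hcard, hinter]
    push_cast
    ring
  rw [← add_sum_erase _ _ (mem_univ i), overlapWeight_self, zero_add,
    sum_congr rfl fun j hj => overlapWeight_of_ne R (ne_of_mem_erase hj).symm,
    sum_erase_eq_sub (mem_univ i), hoff, inter_self]
  ring

theorem sum_sum_overlapWeight_compl (hR : ∀ θ, #{i | θ ∈ R i} = c) (I : Finset ι) :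
    ∑ i ∈ I, ∑ j ∈ Iᶜ, overlapWeight R i j =
      Fintype.card α * ∑ θ, (#{i ∈ I | θ ∈ R i} : ℤ) ^ 2 - (∑ θ, (#{i ∈ I | θ ∈ R i} : ℤ)) ^ 2 := by
  have hcompl (θ : α) : (#{j ∈ Iᶜ | θ ∈ R j} : ℤ) = c - #{i ∈ I | θ ∈ R i} := by
    have := sum_add_sum_compl I fun i => if θ ∈ R i then (1 : ℤ) else 0
    simp only [sum_boole] at this
    rw [← hR θ, ← this]
    ring
  have hsum (s : Finset ι) : ∑ i ∈ s, (#(R i) : ℤ) = ∑ θ, (#{i ∈ s | θ ∈ R i} : ℤ) := by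
    exact_mod_cast sum_card_eq_sum_card_filter_mem R s
  have hcross : ∑ i ∈ I, ∑ j ∈ Iᶜ, (#(R i ∩ R j) : ℤ) =
      ∑ θ, (#{i ∈ I | θ ∈ R i} : ℤ) * (c - #{i ∈ I | θ ∈ R i}) := by
    simp only [← hcompl]
    exact_mod_cast sum_sum_card_inter_eq R I Iᶜ
  calc ∑ i ∈ I, ∑ j ∈ Iᶜ, overlapWeight R i j
      = ∑ i ∈ I, ∑ j ∈ Iᶜ, ((#(R i) : ℤ) * #(R j) - Fintype.card α * #(R i ∩ R j)) := by
        refine sum_congr rfl fun i hi => sum_congr rfl fun j hj => overlapWeight_of_ne R ?_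
        rintro rfl
        exact mem_compl.1 hj hi
    _ = (∑ i ∈ I, (#(R i) : ℤ)) * ∑ j ∈ Iᶜ, (#(R j) : ℤ) -
          Fintype.card α * ∑ i ∈ I, ∑ j ∈ Iᶜ, (#(R i ∩ R j) : ℤ) := by
        rw [sum_mul_sum]
        simp only [mul_sum, sum_sub_distrib]
    _ = _ := by
        simp only [hsum, hcompl, hcross, sum_sub_distrib, mul_sub, sum_const, card_univ,
          nsmul_eq_mul, ← sum_mul, sq]
        ring

theorem emod_mul_emod_le_sum_sum_overlapWeight_compl (hR : ∀ θ, #{i | θ ∈ R i} = c)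
    (I : Finset ι) :
    (∑ i ∈ I, (#(R i) : ℤ)) % Fintype.card α * ((∑ j ∈ Iᶜ, (#(R j) : ℤ)) % Fintype.card α) ≤
      ∑ i ∈ I, ∑ j ∈ Iᶜ, overlapWeight R i j := by
  have hdvd : (Fintype.card α : ℤ) ∣ ∑ i ∈ I, (#(R i) : ℤ) + ∑ j ∈ Iᶜ, (#(R j) : ℤ) := by
    refine ⟨c, ?_⟩
    rw [sum_add_sum_compl]
    exact_mod_cast by simpa using sum_card_inter_of_cover R hR univ
  have hI : ∑ i ∈ I, (#(R i) : ℤ) = ∑ θ, (#{i ∈ I | θ ∈ R i} : ℤ) := by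
    exact_mod_cast sum_card_eq_sum_card_filter_mem R I
  have hvar := Int.sq_sum_add_emod_mul_sub_le_card_mul_sum_sq univ
    fun θ => (#{i ∈ I | θ ∈ R i} : ℤ)
  rw [card_univ] at hvar
  rw [Int.emod_mul_emod_eq_of_dvd_add hdvd, sum_sum_overlapWeight_compl R hR, hI]
  linarith

end Overlap

section ResidueBlocks

variable {m : ℕ}

theorem injOn_natCast_Ico {a b : ℕ} (h : b ≤ a + m) :
    Set.InjOn (Nat.cast : ℕ → ZMod m) (Ico a b) := by
  intro x hx y hy hxy
  simp only [coe_Ico, Set.mem_Ico] at hx hy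
  refine ((ZMod.natCast_eq_natCast_iff x y m).1 hxy).eq_of_abs_lt ?_
  rw [abs_sub_lt_iff]
  omega

theorem card_filter_natCast_Ico_eq {a b : ℕ} (h : b ≤ a + m) (θ : ZMod m) :
    #{t ∈ Ico a b | ((t : ℕ) : ZMod m) = θ} = if θ ∈ (Ico a b).image Nat.cast then 1 else 0 := by
  split_ifs with hθ
  · obtain ⟨t, ht, rfl⟩ := mem_image.1 hθ
    refine card_eq_one.2 ⟨t, eq_singleton_iff_unique_mem.2 ⟨mem_filter.2 ⟨ht, rfl⟩, ?_⟩⟩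
    exact fun u hu => injOn_natCast_Ico h (mem_filter.1 hu).1 ht (mem_filter.1 hu).2
  · exact card_eq_zero.2 <| filter_eq_empty_iff.2 fun t ht htθ => hθ (mem_image.2 ⟨t, ht, htθ⟩)

theorem card_filter_natCast_range_mul [NeZero m] (k : ℕ) (θ : ZMod m) :
    #{t ∈ range (m * k) | ((t : ℕ) : ZMod m) = θ} = k := by
  have h (t : ℕ) : (t : ZMod m) = θ ↔ t ≡ θ.val [MOD m] := by
    rw [← ZMod.natCast_eq_natCast_iff, ZMod.natCast_zmod_val]
  simp only [h, ← Nat.count_eq_card_filter_range, Nat.count_modEq_card _ (NeZero.pos m)]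
  simp [Nat.mul_div_cancel_left k (NeZero.pos m)]

theorem exists_consecutive_residue_blocks {n : ℕ} (e : Fin n → ℕ) (he : ∀ i, e i ≤ m) (s : ℕ) :
    ∃ R : Fin n → Finset (ZMod m), (∀ i, #(R i) = e i) ∧
      ∀ θ, #{i | θ ∈ R i} = #{t ∈ Ico s (s + ∑ i, e i) | ((t : ℕ) : ZMod m) = θ} := by
  induction n generalizing s with
  | zero => exact ⟨finZeroElim, finZeroElim, by simp⟩
  | succ n ih =>
    obtain ⟨R, hcard, hcover⟩ := ih (Fin.tail e) (fun i => he i.succ) (s + e 0)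
    have hblock : s + e 0 ≤ s + m := by have := he 0; omega
    refine ⟨Fin.cons ((Ico s (s + e 0)).image Nat.cast) R, fun i => ?_, fun θ => ?_⟩
    · cases i using Fin.cases with
      | zero => simp [card_image_of_injOn (injOn_natCast_Ico hblock)]
      | succ i => simpa [Fin.tail] using hcard i
    · rw [Fin.card_filter_univ_succ', Fin.sum_univ_succ]
      simp only [Fin.cons_zero, Fin.cons_succ, hcover, ← card_filter_natCast_Ico_eq hblock]
      rw [← card_union_of_disjoint (disjoint_filter_filter (Ico_disjoint_Ico_consecutive _ _ _)),
        ← filter_union, Ico_union_Ico_eq_Ico (by omega) (by omega), add_assoc]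
      rfl

theorem exists_uniform_residue_cover [NeZero m] {n : ℕ} (e : Fin n → ℕ) (he : ∀ i, e i ≤ m)
    (hdvd : m ∣ ∑ i, e i) :
    ∃ R : Fin n → Finset (ZMod m), (∀ i, #(R i) = e i) ∧ ∃ c, ∀ θ, #{i | θ ∈ R i} = c := by
  obtain ⟨k, hk⟩ := hdvd
  obtain ⟨R, hcard, hcover⟩ := exists_consecutive_residue_blocks e he 0
  refine ⟨R, hcard, k, fun θ => ?_⟩
  rw [hcover, zero_add, hk, ← range_eq_Ico, card_filter_natCast_range_mul]

end ResidueBlocks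

/-- The standard construction: if `1 ≤ d_i ≤ m - 1` and `m ∣ Σ d_i`, there exists a rational
weighting of the complete graph on `[n]` (a symmetric function with zero diagonal) such that
the flow through each vertex `i` is `d_i (m - d_i)` and the flow across every proper partition
`I ⊔ Iᶜ` is at least `⟨d(I)⟩_m ⟨d(Iᶜ)⟩_m`. -/
theorem standard_construction {n : ℕ} (m : ℕ) (hm : 2 ≤ m) (d : Fin n → ℤ)
    (hd : ∀ i, 1 ≤ d i ∧ d i ≤ (m : ℤ) - 1) (hdiv : (m : ℤ) ∣ ∑ i, d i) :
    ∃ w : Fin n → Fin n → ℚ,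
      (∀ i j, w i j = w j i) ∧ (∀ i, w i i = 0) ∧
      (∀ i, ∑ j, w i j = ((d i * ((m : ℤ) - d i) : ℤ) : ℚ)) ∧
      (∀ I : Finset (Fin n), 2 ≤ I.card → 2 ≤ Iᶜ.card →
        ∑ i ∈ I, ∑ j ∈ Iᶜ, w i j ≥
          ((((∑ i ∈ I, d i) % (m : ℤ)) * ((∑ j ∈ Iᶜ, d j) % (m : ℤ)) : ℤ) : ℚ)) := by
  have : NeZero m := ⟨by omega⟩
  have hcast (i : Fin n) : ((d i).toNat : ℤ) = d i := Int.toNat_of_nonneg (by linarith [hd i])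
  obtain ⟨R, hcard, c, hcover⟩ := exists_uniform_residue_cover (m := m) (fun i => (d i).toNat)
    (fun i => by have := hd i; omega)
    (Int.natCast_dvd_natCast.1 (by push_cast [hcast]; exact hdiv))
  have hdR (i : Fin n) : d i = #(R i) := by rw [hcard, hcast]
  refine ⟨fun i j => overlapWeight R i j, fun i j => by simp only [overlapWeight_comm R i j],
    fun i => by simp only [overlapWeight_self, Int.cast_zero], fun i => ?_, fun I _ _ => ?_⟩
  · simp only [hdR, ← Int.cast_sum, sum_overlapWeight R hcover i, ZMod.card]
  · have := emod_mul_emod_le_sum_sum_overlapWeight_compl R hcover I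
    rw [ZMod.card] at this
    simp only [hdR, ge_iff_le]
    exact_mod_cast this
end

section
/- Let n ≥ 4 and let D = Σᵢ aᵢψᵢ − Σ_{I,J} b_{I,J} Δ_{I,J} be a divisor class on the moduli space of stable n-pointed rational curves, written in terms of cotangent classes ψᵢ and boundary classes Δ_{I,J} indexed by proper partitions I ⊔ J = [n]. Then D is ℚ-linearly equivalent to Σ_{I,J} c_{I,J} Δ_{I,J} if and only if there is a ℚ-valued weighting w of the complete graph on [n] with w(i) = aᵢ for every vertex i and w(I|J) = b_{I,J} + c_{I,J} for every proper partition I ⊔ J. -/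
open Finset

/-- The ambient ℚ-vector space freely generated by the symbols `ψ_i` (for `i : Fin n`) and
`Δ_I` (for `I : Finset (Fin n)`; only proper subsets in canonical position are used). -/
abbrev Amb (n : ℕ) := (Fin n ⊕ Finset (Fin n)) →₀ ℚ

noncomputable def psi {n : ℕ} (i : Fin n) : Amb n := Finsupp.single (Sum.inl i) 1

noncomputable def delta {n : ℕ} (I : Finset (Fin n)) : Amb n := Finsupp.single (Sum.inr I) 1

/-- Canonical representatives of proper partitions `I ⊔ J = [n]` (`|I|, |J| ≥ 2`): the part
containing the vertex with value `0`. -/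
def reps (n : ℕ) : Finset (Finset (Fin n)) :=
  univ.filter (fun I => 2 ≤ I.card ∧ 2 ≤ Iᶜ.card ∧ ∀ j : Fin n, (j : ℕ) = 0 → j ∈ I)

/-- The span of the Keel relations `ψ_i + ψ_j = Σ_{i ∈ I, j ∈ J} Δ_{I,J}` for `i ≠ j`. -/
noncomputable def keelRels (n : ℕ) : Submodule ℚ (Amb n) :=
  Submodule.span ℚ
    {x | ∃ i j : Fin n, i ≠ j ∧
      x = psi i + psi j -
        ∑ I ∈ (reps n).filter (fun I => (i ∈ I ∧ j ∉ I) ∨ (j ∈ I ∧ i ∉ I)), delta I}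

/-! The Keel relation of a pair `i ≠ j` is the divisor `Σ w(k) ψ_k - Σ w(I|J) Δ_{I,J}` of the
weighting with weight one on the edge `ij` and zero elsewhere: its `Δ`-part lists exactly the
partitions separating `i` and `j`. As this divisor is linear in the weighting, the span of the
relations consists of the divisors of the symmetric loop-free weightings, and since the symbols
`ψ_i`, `Δ_{I,J}` are linearly independent, `D - Σ c_{I,J} Δ_{I,J}` is such a divisor exactly when
the vertex and cut weights of the weighting are its coefficients. -/

namespace Keel

variable {n : ℕ}

noncomputable def keelRel (i j : Fin n) : Amb n :=
  psi i + psi j -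
    ∑ I ∈ (reps n).filter (fun I => (i ∈ I ∧ j ∉ I) ∨ (j ∈ I ∧ i ∉ I)), delta I

noncomputable def divisor (a : Fin n → ℚ) (b : Finset (Fin n) → ℚ) : Amb n :=
  ∑ i, a i • psi i - ∑ I ∈ reps n, b I • delta I

def vertexWeight (w : Fin n → Fin n → ℚ) (i : Fin n) : ℚ := ∑ j, w i j

def cutWeight (w : Fin n → Fin n → ℚ) (I : Finset (Fin n)) : ℚ := ∑ i ∈ I, ∑ j ∈ Iᶜ, w i j

lemma divisor_apply_inl (a : Fin n → ℚ) (b : Finset (Fin n) → ℚ) (k : Fin n) :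
    divisor a b (Sum.inl k) = a k := by
  simp [divisor, psi, delta, Finsupp.single_apply]

lemma divisor_apply_inr (a : Fin n → ℚ) (b : Finset (Fin n) → ℚ) (I : Finset (Fin n)) :
    divisor a b (Sum.inr I) = if I ∈ reps n then -b I else 0 := by
  by_cases hI : I ∈ reps n <;> simp [divisor, psi, delta, Finsupp.single_apply, hI]

lemma divisor_eq_divisor_iff {a a' : Fin n → ℚ} {b b' : Finset (Fin n) → ℚ} :
    divisor a b = divisor a' b' ↔ a = a' ∧ ∀ I ∈ reps n, b I = b' I := by
  constructor
  · intro h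
    refine ⟨funext fun k => ?_, fun I hI => ?_⟩
    · simpa only [divisor_apply_inl] using DFunLike.congr_fun h (Sum.inl k)
    · simpa [divisor_apply_inr, hI] using DFunLike.congr_fun h (Sum.inr I)
  · rintro ⟨rfl, hb⟩
    unfold divisor
    exact congrArg _ (sum_congr rfl fun I hI => by rw [hb I hI])

lemma divisor_sub_sum_smul_delta (a : Fin n → ℚ) (b c : Finset (Fin n) → ℚ) :
    divisor a b - ∑ I ∈ reps n, c I • delta I = divisor a (b + c) := by
  simp only [divisor, Pi.add_apply, add_smul, sum_add_distrib]
  abel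

lemma sum_ite_separated_eq_cutWeight (t : Fin n → Fin n → ℚ) (I : Finset (Fin n)) :
    ∑ i, ∑ j, (if (i ∈ I ∧ j ∉ I) ∨ (j ∈ I ∧ i ∉ I) then t i j else 0) =
      cutWeight (fun i j => t i j + t j i) I := by
  have split (i j : Fin n) : (if (i ∈ I ∧ j ∉ I) ∨ (j ∈ I ∧ i ∉ I) then t i j else 0) =
      (if i ∈ I ∧ j ∉ I then t i j else 0) + (if j ∈ I ∧ i ∉ I then t i j else 0) := by
    by_cases hi : i ∈ I <;> by_cases hj : j ∈ I <;> simp [hi, hj]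
  simp only [split, sum_add_distrib, cutWeight]
  rw [sum_comm (f := fun i j => if j ∈ I ∧ i ∉ I then t i j else 0)]
  simp only [ite_and, ← mem_compl, sum_ite_irrel, sum_const_zero, sum_ite_mem, univ_inter]

lemma sum_smul_keelRel (t : Fin n → Fin n → ℚ) :
    ∑ i, ∑ j, t i j • keelRel i j =
      divisor (vertexWeight fun i j => t i j + t j i) (cutWeight fun i j => t i j + t j i) := by
  simp only [keelRel, divisor, vertexWeight, smul_sub, smul_add, sum_sub_distrib,
    sum_add_distrib, smul_sum, sum_filter, ← sum_ite_separated_eq_cutWeight, sum_smul, smul_ite,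
    smul_zero, ite_smul, zero_smul]
  rw [sum_comm (f := fun i j => t i j • psi j), sum_comm_cycle]
  simp only [add_smul, sum_add_distrib, sum_smul]

/- The diagonal has to vanish: `keelRel i i = 2 • psi i` is not a relation. -/
lemma mem_keelRels_iff {x : Amb n} :
    x ∈ keelRels n ↔
      ∃ t : Fin n → Fin n → ℚ, (∀ i, t i i = 0) ∧ ∑ i, ∑ j, t i j • keelRel i j = x := by
  constructor
  · intro hx
    induction hx using Submodule.span_induction with
    | mem x hx =>
      obtain ⟨i, j, hij, rfl⟩ := hx
      exact ⟨fun k l => if k = i ∧ l = j then 1 else 0, by simp [hij],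
        by simp [ite_and, keelRel]⟩
    | zero => exact ⟨0, by simp, by simp⟩
    | add x y _ _ hx hy =>
      obtain ⟨t, ht, rfl⟩ := hx
      obtain ⟨s, hs, rfl⟩ := hy
      exact ⟨t + s, by simp [ht, hs], by simp [add_smul, sum_add_distrib]⟩
    | smul r x _ hx =>
      obtain ⟨t, ht, rfl⟩ := hx
      exact ⟨r • t, by simp [ht], by simp [smul_sum, smul_smul]⟩
  · rintro ⟨t, ht, rfl⟩
    refine sum_mem fun i _ => sum_mem fun j _ => ?_
    by_cases hij : i = j
    · simp [hij, ht]
    · exact Submodule.smul_mem _ _ (Submodule.subset_span ⟨i, j, hij, rfl⟩)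

lemma mem_keelRels_iff_exists_weighting {x : Amb n} :
    x ∈ keelRels n ↔ ∃ w : Fin n → Fin n → ℚ, (∀ i j, w i j = w j i) ∧ (∀ i, w i i = 0) ∧
      divisor (vertexWeight w) (cutWeight w) = x := by
  rw [mem_keelRels_iff]
  constructor
  · rintro ⟨t, ht, rfl⟩
    exact ⟨fun i j => t i j + t j i, fun i j => add_comm _ _, fun i => by simp [ht],
      (sum_smul_keelRel t).symm⟩
  · rintro ⟨w, hsymm, hdiag, rfl⟩
    refine ⟨fun i j => w i j / 2, fun i => by simp [hdiag], ?_⟩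
    rw [sum_smul_keelRel]
    congr <;> funext i j <;> rw [hsymm j i] <;> ring

end Keel

open Keel in
theorem effectivity_criterion_general {n : ℕ} (a : Fin n → ℚ)
    (b c : Finset (Fin n) → ℚ) :
    ((∑ i, a i • psi i - ∑ I ∈ reps n, b I • delta I) - ∑ I ∈ reps n, c I • delta I)
        ∈ keelRels n
    ↔ ∃ w : Fin n → Fin n → ℚ,
        (∀ i j, w i j = w j i) ∧ (∀ i, w i i = 0) ∧
        (∀ i, ∑ j, w i j = a i) ∧
        (∀ I ∈ reps n, ∑ i ∈ I, ∑ j ∈ Iᶜ, w i j = b I + c I) := by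
  rw [show ∑ i, a i • psi i - ∑ I ∈ reps n, b I • delta I = divisor a b from rfl,
    divisor_sub_sum_smul_delta, mem_keelRels_iff_exists_weighting]
  simp only [divisor_eq_divisor_iff, funext_iff, vertexWeight, cutWeight, Pi.add_apply]

/-- Effectivity criterion: the divisor `D = Σ a_i ψ_i - Σ b_I Δ_I` is ℚ-linearly equivalent
(modulo the Keel relations) to `Σ c_I Δ_I` if and only if there is a ℚ-valued weighting `w`
of the complete graph on `[n]` with flow `a_i` through each vertex `i` and flow `b_I + c_I`
across each proper partition `I ⊔ Iᶜ`. -/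
theorem effectivity_criterion {n : ℕ} (hn : 4 ≤ n) (a : Fin n → ℚ)
    (b c : Finset (Fin n) → ℚ) :
    ((∑ i, a i • psi i - ∑ I ∈ reps n, b I • delta I) - ∑ I ∈ reps n, c I • delta I)
        ∈ keelRels n
    ↔ ∃ w : Fin n → Fin n → ℚ,
        (∀ i j, w i j = w j i) ∧ (∀ i, w i i = 0) ∧
        (∀ i, ∑ j, w i j = a i) ∧
        (∀ I ∈ reps n, ∑ i ∈ I, ∑ j ∈ Iᶜ, w i j = b I + c I) :=
  effectivity_criterion_general a b c
end

section
/- Let n ≥ 4 and let D = Σᵢ aᵢψᵢ − Σ_{I,J} b_{I,J} Δ_{I,J} in the ℚ-vector space generated by ψ_1,…,ψ_n and boundary symbols Δ_{I,J} modulo the Keel relations ψ_i + ψ_j = Σ_{i∈I, j∈J} Δ_{I,J}. Then D lies in the nonnegative cone spanned by the Δ_{I,J} if and only if there exists a ℚ-valued weighting w of the complete graph on [n] such that the flow through each vertex i equals aᵢ and the flow across each proper partition I ⊔ J is at least b_{I,J}. -/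
open Finset

/-! Attach to a weighting `w` of the complete graph the divisor
`Σ_k flow(w)_k ψ_k - Σ_I cut(w)_I Δ_I`; this is linear in `w`. The Keel relation for `{i, j}` is
exactly the divisor of the single edge `ij`, and every weighting is a combination of single
edges, so the Keel relations are precisely the divisors of weightings. Comparing coefficients,
`D - Σ c_I Δ_I` is such a divisor iff the flows are `a` and the cuts are `b + c`, and `c ≥ 0`
becomes the cut inequality. -/

section WeightDivisor

variable {n : ℕ}

noncomputable def psiDeltaComb (f : Fin n → ℚ) (g : Finset (Fin n) → ℚ) : Amb n :=
  ∑ i, f i • psi i - ∑ I ∈ reps n, g I • delta I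

lemma psiDeltaComb_apply_inl (f : Fin n → ℚ) (g : Finset (Fin n) → ℚ) (k : Fin n) :
    psiDeltaComb f g (Sum.inl k) = f k := by
  simp [psiDeltaComb, psi, delta, Finsupp.single_apply]

lemma psiDeltaComb_apply_inr (f : Fin n → ℚ) (g : Finset (Fin n) → ℚ) (K : Finset (Fin n)) :
    psiDeltaComb f g (Sum.inr K) = if K ∈ reps n then -g K else 0 := by
  by_cases hK : K ∈ reps n <;> simp [psiDeltaComb, psi, delta, Finsupp.single_apply, hK]

lemma psiDeltaComb_eq_iff {f f' : Fin n → ℚ} {g g' : Finset (Fin n) → ℚ} :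
    psiDeltaComb f g = psiDeltaComb f' g' ↔ f = f' ∧ ∀ I ∈ reps n, g I = g' I := by
  constructor
  · intro h
    refine ⟨funext fun k => ?_, fun I hI => ?_⟩
    · simpa only [psiDeltaComb_apply_inl] using DFunLike.congr_fun h (Sum.inl k)
    · simpa [psiDeltaComb_apply_inr, hI] using DFunLike.congr_fun h (Sum.inr I)
  · rintro ⟨rfl, hg⟩
    exact Finsupp.ext fun
      | .inl k => by simp only [psiDeltaComb_apply_inl]
      | .inr K => by by_cases hK : K ∈ reps n <;> simp [psiDeltaComb_apply_inr, hK, hg]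

def flow (w : Fin n → Fin n → ℚ) (i : Fin n) : ℚ := ∑ j, w i j

def cut (w : Fin n → Fin n → ℚ) (I : Finset (Fin n)) : ℚ := ∑ i ∈ I, ∑ j ∈ Iᶜ, w i j

noncomputable def weightDivisor : (Fin n → Fin n → ℚ) →ₗ[ℚ] Amb n where
  toFun w := psiDeltaComb (flow w) (cut w)
  map_add' w w' := by
    simp only [psiDeltaComb, flow, cut, Pi.add_apply, sum_add_distrib, add_smul]
    abel
  map_smul' r w := by
    simp only [psiDeltaComb, flow, cut, Pi.smul_apply, smul_eq_mul, ← mul_sum, mul_smul,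
      ← smul_sum, smul_sub, RingHom.id_apply]

lemma weightDivisor_apply (w : Fin n → Fin n → ℚ) :
    weightDivisor w = psiDeltaComb (flow w) (cut w) :=
  rfl

def weightings (n : ℕ) : Submodule ℚ (Fin n → Fin n → ℚ) where
  carrier := {w | (∀ i j, w i j = w j i) ∧ ∀ i, w i i = 0}
  add_mem' := by
    rintro w w' ⟨hs, hd⟩ ⟨hs', hd'⟩
    exact ⟨fun i j => by simp [hs i j, hs' i j], fun i => by simp [hd, hd']⟩
  zero_mem' := by simp
  smul_mem' := by
    rintro r w ⟨hs, hd⟩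
    exact ⟨fun i j => by simp [hs i j], fun i => by simp [hd]⟩

def edge (i j : Fin n) : Fin n → Fin n → ℚ :=
  Pi.single i (Pi.single j 1) + Pi.single j (Pi.single i 1)

lemma edge_mem_weightings {i j : Fin n} (hij : i ≠ j) : edge i j ∈ weightings n := by
  refine ⟨fun k l => ?_, fun k => ?_⟩ <;>
  · simp only [edge, Pi.add_apply, Pi.single_apply]
    split_ifs <;> simp_all

lemma sum_half_smul_edge {w : Fin n → Fin n → ℚ} (hw : w ∈ weightings n) :
    ∑ p : Fin n × Fin n, (w p.1 p.2 / 2) • edge p.1 p.2 = w := by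
  funext k l
  simp only [edge, Finset.sum_apply, Pi.add_apply, Pi.smul_apply, smul_add, sum_add_distrib,
    Pi.single_apply, ite_apply, Pi.zero_apply, smul_eq_mul, mul_ite, mul_one, mul_zero,
    Fintype.sum_prod_type]
  simp [hw.1 l k]

lemma flow_edge (i j : Fin n) : flow (edge i j) = Pi.single i 1 + Pi.single j 1 := by
  funext k
  simp [flow, edge, Pi.single_apply, ite_apply, sum_add_distrib]

lemma cut_edge (i j : Fin n) (I : Finset (Fin n)) :
    cut (edge i j) I = if (i ∈ I ∧ j ∉ I) ∨ (j ∈ I ∧ i ∉ I) then 1 else 0 := by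
  simp only [cut, edge, Pi.add_apply, Pi.single_apply, ite_apply, Pi.zero_apply, sum_add_distrib,
    sum_ite_irrel, sum_ite_eq', mem_compl, ite_not, sum_const_zero]
  by_cases hi : i ∈ I <;> by_cases hj : j ∈ I <;> simp [hi, hj]

lemma keelRel_eq_weightDivisor_edge (i j : Fin n) :
    psi i + psi j - ∑ I ∈ (reps n).filter (fun I => (i ∈ I ∧ j ∉ I) ∨ (j ∈ I ∧ i ∉ I)), delta I =
      weightDivisor (edge i j) := by
  rw [weightDivisor_apply, flow_edge, show cut (edge i j) = _ from funext (cut_edge i j)]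
  simp [psiDeltaComb, sum_filter, add_smul, sum_add_distrib, Pi.single_apply, ite_smul]

lemma keelRels_eq_map_weightDivisor : keelRels n = (weightings n).map weightDivisor := by
  apply le_antisymm
  · rw [keelRels, Submodule.span_le]
    rintro x ⟨i, j, hij, rfl⟩
    exact ⟨edge i j, edge_mem_weightings hij, (keelRel_eq_weightDivisor_edge i j).symm⟩
  · rintro x ⟨w, hw, rfl⟩
    rw [← sum_half_smul_edge hw, map_sum]
    refine Submodule.sum_mem _ fun ⟨i, j⟩ _ => ?_
    rw [map_smul]
    by_cases hij : i = j
    · simp [hij, hw.2 j]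
    · exact Submodule.smul_mem _ _ <|
        Submodule.subset_span ⟨i, j, hij, (keelRel_eq_weightDivisor_edge i j).symm⟩

end WeightDivisor

theorem effectivity_criterion_nonneg_general {n : ℕ} (a : Fin n → ℚ)
    (b : Finset (Fin n) → ℚ) :
    (∃ c : Finset (Fin n) → ℚ, (∀ I ∈ reps n, 0 ≤ c I) ∧
      ((∑ i, a i • psi i - ∑ I ∈ reps n, b I • delta I) - ∑ I ∈ reps n, c I • delta I)
        ∈ keelRels n)
    ↔ ∃ w : Fin n → Fin n → ℚ,
        (∀ i j, w i j = w j i) ∧ (∀ i, w i i = 0) ∧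
        (∀ i, ∑ j, w i j = a i) ∧
        (∀ I ∈ reps n, ∑ i ∈ I, ∑ j ∈ Iᶜ, w i j ≥ b I) := by
  have hD (c : Finset (Fin n) → ℚ) :
      (∑ i, a i • psi i - ∑ I ∈ reps n, b I • delta I) - ∑ I ∈ reps n, c I • delta I =
        psiDeltaComb a (b + c) := by
    simp only [psiDeltaComb, Pi.add_apply, add_smul, sum_add_distrib, sub_sub]
  simp only [hD, keelRels_eq_map_weightDivisor, Submodule.mem_map, weightDivisor_apply,
    psiDeltaComb_eq_iff]
  constructor
  · rintro ⟨c, hc, w, ⟨hsymm, hdiag⟩, hflow, hcut⟩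
    refine ⟨w, hsymm, hdiag, congrFun hflow, fun I hI => ?_⟩
    change b I ≤ cut w I
    rw [hcut I hI]
    exact le_add_of_nonneg_right (hc I hI)
  · rintro ⟨w, hsymm, hdiag, hflow, hcut⟩
    exact ⟨fun I => cut w I - b I, fun I hI => sub_nonneg.2 (hcut I hI), w, ⟨hsymm, hdiag⟩,
      funext hflow, fun I _ => by simp⟩

/-- Effectivity criterion: `D = Σ a_i ψ_i - Σ b_I Δ_I` is ℚ-linearly equivalent (modulo the
Keel relations) to an effective combination `Σ c_I Δ_I` with all `c_I ≥ 0` if and only if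
there is a ℚ-valued weighting `w` of the complete graph on `[n]` with flow `a_i` through each
vertex `i` and flow at least `b_I` across each proper partition `I ⊔ Iᶜ`. -/
theorem effectivity_criterion_nonneg {n : ℕ} (hn : 4 ≤ n) (a : Fin n → ℚ)
    (b : Finset (Fin n) → ℚ) :
    (∃ c : Finset (Fin n) → ℚ, (∀ I ∈ reps n, 0 ≤ c I) ∧
      ((∑ i, a i • psi i - ∑ I ∈ reps n, b I • delta I) - ∑ I ∈ reps n, c I • delta I)
        ∈ keelRels n)
    ↔ ∃ w : Fin n → Fin n → ℚ,
        (∀ i j, w i j = w j i) ∧ (∀ i, w i i = 0) ∧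
        (∀ i, ∑ j, w i j = a i) ∧
        (∀ I ∈ reps n, ∑ i ∈ I, ∑ j ∈ Iᶜ, w i j ≥ b I) :=
  effectivity_criterion_nonneg_general a b
end

section
/- Let m ≥ 2 divide Σᵢ dᵢ. The divisor D((d_1,…,d_n), m) = Σᵢ ⟨dᵢ⟩_m⟨m−dᵢ⟩_m ψᵢ − Σ_{I,J} ⟨d(I)⟩_m⟨d(J)⟩_m Δ_{I,J} on M̄_{0,n}, with 1 ≤ dᵢ ≤ m−1 for all i, is ℚ-linearly equivalent to an effective combination of the boundary divisors Δ_{I,J}. -/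
/-!
Write `f a = ⟨a⟩_m ⟨-a⟩_m` (`emodProd m a`); as `m ∣ Σ dᵢ`, the coefficient of `Δ_{I,J}` is
`f (d I)`. For a symmetric weighting `t` of the complete graph on `[n]`, summing `t i j / 2` times
the Keel relation of every ordered pair `i ≠ j` shows `Σᵢ (Σⱼ t i j) ψᵢ ≡ Σ_I cut_t(I) Δ_I`, where
`cut_t(I)` is the weight of the edges leaving `I`. So it suffices to find `t ≥ 0` with weighted
degrees `f dᵢ` and `cut_t(I) ≥ f (d I)` for all `I`.

Such a `t` is built by induction on the number of vertices: merge two vertices `a`, `b` into one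
labelled `d a + d b`, weight the smaller graph, and split the merged vertex again, giving the edge
`ab` the weight `δ = (f(d a) + f(d b) - f(d a + d b)) / 2` and sharing every other edge at it in
the ratio `α : 1 - α`, where `α = (f(d a) + f(d a + d b) - f(d b)) / (2 f(d a + d b))` (and
`α = 0` if `m ∣ d a + d b`). Passing to complements, only cuts avoiding `b` need checking; for
those containing `a` the cut condition becomes `f(x + d a) ≤ δ + α f(x + d a + d b) + (1 - α) f x`,
a polynomial inequality in the residues, checked case by case on the carries.
-/

open Finset

def emodProd (M a : ℤ) : ℤ := a % M * (-a % M)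

section emodProd

variable {M : ℤ}

theorem emodProd_congr {a b : ℤ} (h : a ≡ b [ZMOD M]) : emodProd M a = emodProd M b := by
  rw [emodProd, emodProd, h.eq, h.neg.eq]

theorem emodProd_neg (a : ℤ) : emodProd M (-a) = emodProd M a := by
  rw [emodProd, emodProd, neg_neg, mul_comm]

theorem emodProd_of_dvd {a : ℤ} (h : M ∣ a) : emodProd M a = 0 := by
  rw [emodProd, Int.emod_eq_zero_of_dvd h, zero_mul]

theorem emodProd_nonneg (hM : 0 < M) (a : ℤ) : 0 ≤ emodProd M a :=
  mul_nonneg (Int.emod_nonneg _ hM.ne') (Int.emod_nonneg _ hM.ne')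

theorem emodProd_pos (hM : 0 < M) {a : ℤ} (h : ¬M ∣ a) : 0 < emodProd M a := by
  have ha : a % M ≠ 0 := fun h' => h (Int.dvd_of_emod_eq_zero h')
  have hna : -a % M ≠ 0 := fun h' => h (Int.dvd_neg.mp (Int.dvd_of_emod_eq_zero h'))
  exact mul_pos ((Int.emod_nonneg _ hM.ne').lt_of_ne' ha) ((Int.emod_nonneg _ hM.ne').lt_of_ne' hna)

theorem emodProd_eq_of_le_of_lt (k : ℤ) {a : ℤ} (h₀ : k * M ≤ a) (h₁ : a < k * M + M) :
    emodProd M a = (a - k * M) * (k * M + M - a) := by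
  have hM : 0 < M := by linarith
  rw [emodProd_congr (show a ≡ a - k * M [ZMOD M] from (Int.modEq_iff_dvd.mpr ⟨-k, by ring⟩))]
  rcases h₀.eq_or_lt with h | h
  · simp [emodProd, ← h]
  · rw [emodProd, Int.emod_eq_of_lt (by linarith) (by linarith),
      show -(a - k * M) = (k * M + M - a) + (-1) * M by ring, Int.add_mul_emod_self_right,
      Int.emod_eq_of_lt (by linarith) (by linarith)]

theorem emodProd_add_le (hM : 0 < M) (a b : ℤ) :
    emodProd M (a + b) ≤ emodProd M a + emodProd M b := by
  rw [emodProd_congr (Int.mod_modEq a M).symm, emodProd_congr (Int.mod_modEq b M).symm,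
    emodProd_congr ((Int.mod_modEq a M).add (Int.mod_modEq b M)).symm]
  have hu := Int.emod_nonneg a hM.ne'
  have hu' := Int.emod_lt_of_pos a hM
  have hv := Int.emod_nonneg b hM.ne'
  have hv' := Int.emod_lt_of_pos b hM
  set u := a % M
  set v := b % M
  rw [emodProd_eq_of_le_of_lt 0 (a := u) (by linarith) (by linarith),
    emodProd_eq_of_le_of_lt 0 (a := v) (by linarith) (by linarith)]
  rcases lt_or_ge (u + v) M with c | c
  · rw [emodProd_eq_of_le_of_lt 0 (by linarith) (by linarith)]
    nlinarith
  · rw [emodProd_eq_of_le_of_lt 1 (by linarith) (by linarith)]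
    nlinarith

/-- `f (x + p) ≤ δ + α f (x + p + q) + (1 - α) f x` for the coefficients of the splitting,
multiplied by `2 f (p + q)`. -/
theorem two_mul_emodProd_mul_le (hM : 0 < M) (p q x : ℤ) :
    2 * emodProd M (p + q) * emodProd M (x + p) ≤
      emodProd M (p + q) * (emodProd M p + emodProd M q - emodProd M (p + q))
      + (emodProd M p + emodProd M (p + q) - emodProd M q) * emodProd M (x + p + q)
      + (emodProd M q + emodProd M (p + q) - emodProd M p) * emodProd M x := by
  have hp := Int.mod_modEq p M
  have hq := Int.mod_modEq q M
  have hx := Int.mod_modEq x M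
  rw [emodProd_congr hp.symm, emodProd_congr hq.symm, emodProd_congr hx.symm,
    emodProd_congr (hp.add hq).symm, emodProd_congr (hx.add hp).symm,
    emodProd_congr ((hx.add hp).add hq).symm]
  have hu := Int.emod_nonneg p hM.ne'
  have hu' := Int.emod_lt_of_pos p hM
  have hv := Int.emod_nonneg q hM.ne'
  have hv' := Int.emod_lt_of_pos q hM
  have hw := Int.emod_nonneg x hM.ne'
  have hw' := Int.emod_lt_of_pos x hM
  set u := p % M
  set v := q % M
  set w := x % M
  rw [emodProd_eq_of_le_of_lt 0 (a := u) (by linarith) (by linarith),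
    emodProd_eq_of_le_of_lt 0 (a := v) (by linarith) (by linarith),
    emodProd_eq_of_le_of_lt 0 (a := w) (by linarith) (by linarith)]
  rcases lt_or_ge (u + v) M with c₁ | c₁ <;> rcases lt_or_ge (w + u) M with c₂ | c₂
  · rcases lt_or_ge (w + u + v) M with c₃ | c₃
    · rw [emodProd_eq_of_le_of_lt 0 (a := u + v) (by linarith) (by linarith),
        emodProd_eq_of_le_of_lt 0 (a := w + u) (by linarith) (by linarith),
        emodProd_eq_of_le_of_lt 0 (a := w + u + v) (by linarith) (by linarith)]
      nlinarith
    · rw [emodProd_eq_of_le_of_lt 0 (a := u + v) (by linarith) (by linarith),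
        emodProd_eq_of_le_of_lt 0 (a := w + u) (by linarith) (by linarith),
        emodProd_eq_of_le_of_lt 1 (a := w + u + v) (by linarith) (by linarith)]
      nlinarith [mul_nonneg (mul_nonneg (mul_nonneg hM.le hu) (show (0:ℤ) ≤ M - u - v by omega))
        (show (0:ℤ) ≤ w + u + v - M by omega)]
  · rw [emodProd_eq_of_le_of_lt 0 (a := u + v) (by linarith) (by linarith),
      emodProd_eq_of_le_of_lt 1 (a := w + u) (by linarith) (by linarith),
      emodProd_eq_of_le_of_lt 1 (a := w + u + v) (by linarith) (by linarith)]
    nlinarith [mul_nonneg (mul_nonneg (mul_nonneg hM.le hv) (show (0:ℤ) ≤ M - w by omega))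
      (show (0:ℤ) ≤ M - u - v by omega)]
  · rw [emodProd_eq_of_le_of_lt 1 (a := u + v) (by linarith) (by linarith),
      emodProd_eq_of_le_of_lt 0 (a := w + u) (by linarith) (by linarith),
      emodProd_eq_of_le_of_lt 1 (a := w + u + v) (by linarith) (by linarith)]
    nlinarith [mul_nonneg (mul_nonneg (mul_nonneg hM.le hw) (show (0:ℤ) ≤ M - v by omega))
      (show (0:ℤ) ≤ u + v - M by omega)]
  · rcases lt_or_ge (w + u + v) (2 * M) with c₃ | c₃
    · rw [emodProd_eq_of_le_of_lt 1 (a := u + v) (by linarith) (by linarith),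
        emodProd_eq_of_le_of_lt 1 (a := w + u) (by linarith) (by linarith),
        emodProd_eq_of_le_of_lt 1 (a := w + u + v) (by linarith) (by linarith)]
      nlinarith [mul_nonneg (mul_nonneg (mul_nonneg hM.le (show (0:ℤ) ≤ M - u by omega))
        (show (0:ℤ) ≤ u + v - M by omega)) (show (0:ℤ) ≤ 2 * M - u - v - w by omega)]
    · rw [emodProd_eq_of_le_of_lt 1 (a := u + v) (by linarith) (by linarith),
        emodProd_eq_of_le_of_lt 1 (a := w + u) (by linarith) (by linarith),
        emodProd_eq_of_le_of_lt 2 (a := w + u + v) (by linarith) (by linarith)]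
      nlinarith

structure IsSplitCoeffs (M p q : ℤ) (α δ : ℚ) : Prop where
  α_nonneg : 0 ≤ α
  α_le_one : α ≤ 1
  δ_nonneg : 0 ≤ δ
  add_mul_eq_left : δ + α * emodProd M (p + q) = emodProd M p
  add_mul_eq_right : δ + (1 - α) * emodProd M (p + q) = emodProd M q
  le_add_mul : ∀ x, (emodProd M (x + p) : ℚ) ≤
    δ + α * emodProd M (x + p + q) + (1 - α) * emodProd M x

theorem exists_isSplitCoeffs (hM : 0 < M) (p q : ℤ) : ∃ α δ, IsSplitCoeffs M p q α δ := by
  have hPR : emodProd M p ≤ emodProd M (p + q) + emodProd M q := by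
    simpa [emodProd_neg] using emodProd_add_le hM (p + q) (-q)
  have hQR : emodProd M q ≤ emodProd M (p + q) + emodProd M p := by
    simpa [emodProd_neg, add_comm] using emodProd_add_le hM (p + q) (-p)
  have hRPQ := emodProd_add_le hM p q
  by_cases hpq : M ∣ p + q
  · have hR := emodProd_of_dvd hpq
    have hQP : emodProd M q = emodProd M p := by
      rw [← emodProd_neg, emodProd_congr (Int.modEq_iff_dvd.mpr (by simpa using hpq))]
    refine ⟨0, emodProd M p, ⟨le_rfl, zero_le_one, by exact_mod_cast emodProd_nonneg hM p,
      by simp [hR], by simp [hR, hQP], fun x => ?_⟩⟩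
    have := emodProd_add_le hM x p
    simp only [zero_mul, add_zero, sub_zero, one_mul]
    exact_mod_cast (by linarith : emodProd M (x + p) ≤ emodProd M p + emodProd M x)
  · have hR : (0 : ℚ) < emodProd M (p + q) := by exact_mod_cast emodProd_pos hM hpq
    have hPR' : (emodProd M p : ℚ) ≤ emodProd M (p + q) + emodProd M q := by exact_mod_cast hPR
    have hQR' : (emodProd M q : ℚ) ≤ emodProd M (p + q) + emodProd M p := by exact_mod_cast hQR
    have hRPQ' : (emodProd M (p + q) : ℚ) ≤ emodProd M p + emodProd M q := by
      exact_mod_cast hRPQ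
    have key : ∀ x, (2 * emodProd M (p + q) * emodProd M (x + p) : ℚ) ≤
        emodProd M (p + q) * (emodProd M p + emodProd M q - emodProd M (p + q))
        + (emodProd M p + emodProd M (p + q) - emodProd M q) * emodProd M (x + p + q)
        + (emodProd M q + emodProd M (p + q) - emodProd M p) * emodProd M x :=
      fun x => by exact_mod_cast two_mul_emodProd_mul_le hM p q x
    set P : ℚ := ↑(emodProd M p)
    set Q : ℚ := ↑(emodProd M q)
    set R : ℚ := ↑(emodProd M (p + q))
    refine ⟨(P + R - Q) / (2 * R), (P + Q - R) / 2, ⟨div_nonneg (by linarith) (by linarith),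
      (div_le_one (by positivity)).2 (by linarith), by linarith,
      by field_simp; ring, by field_simp; ring, fun x => ?_⟩⟩
    rw [← sub_nonneg]
    have : (P + Q - R) / 2 + (P + R - Q) / (2 * R) * emodProd M (x + p + q)
        + (1 - (P + R - Q) / (2 * R)) * emodProd M x - emodProd M (x + p)
        = (R * (P + Q - R) + (P + R - Q) * emodProd M (x + p + q)
        + (Q + R - P) * emodProd M x - 2 * R * emodProd M (x + p)) / (2 * R) := by
      field_simp; ring
    rw [this]
    exact div_nonneg (by linarith [key x]) (by linarith)

end emodProd

section Weighting

variable {ι : Type*} [DecidableEq ι]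

def cutWeight (t : ι → ι → ℚ) (V I : Finset ι) : ℚ := ∑ i ∈ I, ∑ j ∈ V \ I, t i j

theorem cutWeight_sdiff {t : ι → ι → ℚ} (ht : ∀ i j, t i j = t j i) {V I : Finset ι}
    (hI : I ⊆ V) : cutWeight t V (V \ I) = cutWeight t V I := by
  rw [cutWeight, cutWeight, Finset.sdiff_sdiff_eq_self hI, sum_comm]
  exact sum_congr rfl fun i _ => sum_congr rfl fun j _ => ht j i

theorem cutWeight_singleton {t : ι → ι → ℚ} (ht : ∀ i, t i i = 0) (V : Finset ι) (i : ι) :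
    cutWeight t V {i} = ∑ j ∈ V, t i j := by
  rw [cutWeight, sum_singleton, sdiff_singleton_eq_erase, sum_erase _ (ht i)]

theorem emodProd_sum_sdiff {M : ℤ} {d : ι → ℤ} {V I : Finset ι} (hV : M ∣ ∑ i ∈ V, d i)
    (hI : I ⊆ V) : emodProd M (∑ i ∈ V \ I, d i) = emodProd M (∑ i ∈ I, d i) := by
  rw [sum_sdiff_eq_sub hI, ← emodProd_neg (∑ i ∈ I, d i)]
  refine emodProd_congr (Int.modEq_iff_dvd.mpr ?_)
  rw [show -∑ i ∈ I, d i - (∑ i ∈ V, d i - ∑ i ∈ I, d i) = -∑ i ∈ V, d i by ring]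
  exact dvd_neg.2 hV

structure IsCutWeighting (M : ℤ) (V : Finset ι) (d : ι → ℤ) (t : ι → ι → ℚ) : Prop where
  nonneg : ∀ i j, 0 ≤ t i j
  symm : ∀ i j, t i j = t j i
  diag : ∀ i, t i i = 0
  cutWeight_singleton_eq : ∀ i ∈ V, cutWeight t V {i} = emodProd M (d i)
  le_cutWeight : ∀ I ⊆ V, (emodProd M (∑ i ∈ I, d i) : ℚ) ≤ cutWeight t V I

theorem isCutWeighting_zero_of_card_le_one {M : ℤ} {V : Finset ι} {d : ι → ℤ}
    (hV : M ∣ ∑ i ∈ V, d i) (hcard : V.card ≤ 1) : IsCutWeighting M V d 0 := by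
  have hdvd : ∀ I ⊆ V, M ∣ ∑ i ∈ I, d i := by
    intro I hI
    rcases I.eq_empty_or_nonempty with rfl | hne
    · simp
    · rwa [eq_of_subset_of_card_le hI (hcard.trans hne.card_pos)]
  refine ⟨fun _ _ => le_rfl, fun _ _ => rfl, fun _ => rfl, fun i hi => ?_, fun I hI => ?_⟩
  · simpa [cutWeight, eq_comm] using emodProd_of_dvd (hdvd {i} (singleton_subset_iff.2 hi))
  · simp [cutWeight, emodProd_of_dvd (hdvd I hI)]

theorem le_cutWeight_of_notMem {M : ℤ} {V : Finset ι} {d : ι → ℤ} {t : ι → ι → ℚ}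
    (ht : ∀ i j, t i j = t j i) (hV : M ∣ ∑ i ∈ V, d i) (b : ι)
    (h : ∀ I ⊆ V, b ∉ I → (emodProd M (∑ i ∈ I, d i) : ℚ) ≤ cutWeight t V I) :
    ∀ I ⊆ V, (emodProd M (∑ i ∈ I, d i) : ℚ) ≤ cutWeight t V I := by
  intro I hI
  by_cases hb : b ∈ I
  · have := h (V \ I) sdiff_subset (fun h' => (mem_sdiff.1 h').2 hb)
    rwa [emodProd_sum_sdiff hV hI, cutWeight_sdiff ht hI] at this
  · exact h I hI hb

end Weighting

section Split

variable {ι : Type*} [DecidableEq ι] {a b i j : ι} {α δ : ℚ} {t : ι → ι → ℚ}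

variable (a b α) in
def splitShare (i : ι) : ℚ := if i = a then α else if i = b then 1 - α else 1

variable (a b α δ t) in
def splitWeight (i j : ι) : ℚ :=
  if s(i, j) = s(a, b) then δ
  else splitShare a b α i * splitShare a b α j * t (if i = b then a else i) (if j = b then a else j)

theorem splitWeight_comm (ht : ∀ i j, t i j = t j i) (i j : ι) :
    splitWeight a b α δ t i j = splitWeight a b α δ t j i := by
  simp only [splitWeight, Sym2.eq_swap (a := i), ht (if i = b then a else i),
    mul_comm (splitShare a b α i)]

theorem splitWeight_nonneg (hα₀ : 0 ≤ α) (hα₁ : α ≤ 1) (hδ : 0 ≤ δ) (ht : ∀ i j, 0 ≤ t i j)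
    (i j : ι) : 0 ≤ splitWeight a b α δ t i j := by
  have hs : ∀ k, 0 ≤ splitShare a b α k := fun k => by
    unfold splitShare; split_ifs <;> linarith
  exact ite_nonneg hδ (mul_nonneg (mul_nonneg (hs i) (hs j)) (ht _ _))

theorem splitWeight_self (hab : a ≠ b) (ht : ∀ i, t i i = 0) (i : ι) :
    splitWeight a b α δ t i i = 0 := by
  simp only [splitWeight, ht, mul_zero, ite_eq_right_iff]
  rintro h
  exact absurd (Sym2.eq_iff.1 h) (by rintro (⟨rfl, rfl⟩ | ⟨rfl, rfl⟩) <;> exact hab rfl)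

theorem splitWeight_left_right : splitWeight a b α δ t a b = δ := by
  simp [splitWeight]

theorem splitWeight_left (hja : j ≠ a) (hjb : j ≠ b) :
    splitWeight a b α δ t a j = α * t a j := by
  simp [splitWeight, splitShare, hja, hjb]

theorem splitWeight_right (hab : a ≠ b) (hja : j ≠ a) (hjb : j ≠ b) :
    splitWeight a b α δ t b j = (1 - α) * t a j := by
  simp [splitWeight, splitShare, hja, hjb, hab.symm]

theorem splitWeight_of_ne (hia : i ≠ a) (hib : i ≠ b) (hja : j ≠ a) (hjb : j ≠ b) :
    splitWeight a b α δ t i j = t i j := by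
  simp [splitWeight, splitShare, hia, hib, hja, hjb]

variable {V I : Finset ι}

theorem cutWeight_splitWeight_of_mem_of_notMem (hab : a ≠ b) (ht : ∀ i j, t i j = t j i)
    (ha : a ∈ V) (hb : b ∈ V) (haI : a ∈ I) (hbI : b ∉ I) :
    cutWeight (splitWeight a b α δ t) V I =
      δ + α * cutWeight t (V.erase b) I + (1 - α) * cutWeight t (V.erase b) (I.erase a) := by
  set B := (V \ I).erase b
  have hB : ∀ j ∈ B, j ≠ a ∧ j ≠ b := fun j hj =>
    ⟨fun h => (mem_sdiff.1 (mem_of_mem_erase hj)).2 (h ▸ haI), ne_of_mem_erase hj⟩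
  have hJ : ∀ i ∈ I.erase a, i ≠ a ∧ i ≠ b := fun i hi =>
    ⟨ne_of_mem_erase hi, fun h => hbI (h ▸ mem_of_mem_erase hi)⟩
  have hbVI : b ∈ V \ I := mem_sdiff.2 ⟨hb, hbI⟩
  have hsdiff : V.erase b \ I = B := erase_sdiff_comm V I b
  have hsdiff' : V.erase b \ I.erase a = insert a B := by
    rw [sdiff_erase (mem_erase.2 ⟨hab, ha⟩), hsdiff]
  have haB : a ∉ B := fun h => (hB a h).1 rfl
  have row_a : ∑ j ∈ V \ I, splitWeight a b α δ t a j = δ + α * ∑ j ∈ B, t a j := by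
    rw [← add_sum_erase _ _ hbVI, splitWeight_left_right, mul_sum]
    exact congrArg _ (sum_congr rfl fun j hj => splitWeight_left (hB j hj).1 (hB j hj).2)
  have row_J : ∀ i ∈ I.erase a,
      ∑ j ∈ V \ I, splitWeight a b α δ t i j = (1 - α) * t i a + ∑ j ∈ B, t i j := by
    intro i hi
    rw [← add_sum_erase _ _ hbVI, splitWeight_comm ht,
      splitWeight_right hab (hJ i hi).1 (hJ i hi).2, ht a i]
    exact congrArg _ (sum_congr rfl fun j hj =>
      splitWeight_of_ne (hJ i hi).1 (hJ i hi).2 (hB j hj).1 (hB j hj).2)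
  have cut_I : cutWeight t (V.erase b) I = ∑ j ∈ B, t a j + ∑ i ∈ I.erase a, ∑ j ∈ B, t i j := by
    rw [cutWeight, hsdiff, ← add_sum_erase _ _ haI]
  have cut_J : cutWeight t (V.erase b) (I.erase a) =
      ∑ i ∈ I.erase a, t i a + ∑ i ∈ I.erase a, ∑ j ∈ B, t i j := by
    rw [cutWeight, hsdiff', ← sum_add_distrib]
    exact sum_congr rfl fun i _ => sum_insert haB
  rw [cutWeight, ← add_sum_erase _ _ haI, row_a, sum_congr rfl row_J, sum_add_distrib, ← mul_sum,
    cut_I, cut_J]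
  ring

theorem cutWeight_splitWeight_of_notMem (hab : a ≠ b) (ht : ∀ i j, t i j = t j i)
    (ha : a ∈ V) (hb : b ∈ V) (haI : a ∉ I) (hbI : b ∉ I) :
    cutWeight (splitWeight a b α δ t) V I = cutWeight t (V.erase b) I := by
  have haB : a ∈ (V \ I).erase b := mem_erase.2 ⟨hab, mem_sdiff.2 ⟨ha, haI⟩⟩
  rw [cutWeight, cutWeight, erase_sdiff_comm]
  refine sum_congr rfl fun i hi => ?_
  have hia : i ≠ a := fun h => haI (h ▸ hi)
  have hib : i ≠ b := fun h => hbI (h ▸ hi)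
  rw [← add_sum_erase _ _ (mem_sdiff.2 ⟨hb, hbI⟩), ← add_sum_erase _ _ haB,
    ← add_sum_erase _ _ haB, splitWeight_comm ht i b, splitWeight_right hab hia hib,
    splitWeight_comm ht i a, splitWeight_left hia hib, ht a i,
    sum_congr rfl fun j hj => splitWeight_of_ne hia hib (ne_of_mem_erase hj)
      (ne_of_mem_erase (mem_of_mem_erase hj))]
  ring

end Split

section Existence

variable {ι : Type*} [DecidableEq ι] {M : ℤ} {V : Finset ι} {d : ι → ℤ} {a b : ι}

theorem sum_erase_update_add (hab : a ≠ b) (ha : a ∈ V) (hb : b ∈ V) :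
    ∑ i ∈ V.erase b, Function.update d a (d a + d b) i = ∑ i ∈ V, d i := by
  rw [sum_update_of_mem (mem_erase.2 ⟨hab, ha⟩), sdiff_singleton_eq_erase, ← add_sum_erase V d hb,
    ← add_sum_erase (V.erase b) d (mem_erase.2 ⟨hab, ha⟩)]
  ring

variable {α δ : ℚ} {t : ι → ι → ℚ}

theorem IsCutWeighting.cutWeight_splitWeight_singleton
    (ht : IsCutWeighting M (V.erase b) (Function.update d a (d a + d b)) t)
    (hc : IsSplitCoeffs M (d a) (d b) α δ) (hab : a ≠ b) (ha : a ∈ V) (hb : b ∈ V)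
    {i : ι} (hi : i ∈ V) : cutWeight (splitWeight a b α δ t) V {i} = emodProd M (d i) := by
  have ha' : a ∈ V.erase b := mem_erase.2 ⟨hab, ha⟩
  have hR : cutWeight t (V.erase b) {a} = emodProd M (d a + d b) := by
    rw [ht.cutWeight_singleton_eq a ha', Function.update_self]
  by_cases hia : i = a
  · subst hia
    rw [cutWeight_splitWeight_of_mem_of_notMem hab ht.symm ha hb (mem_singleton_self _)
      (by simpa using hab.symm), hR, erase_singleton]
    simpa [cutWeight] using hc.add_mul_eq_left
  by_cases hib : i = b
  · subst hib
    have hV' : cutWeight t (V.erase i) (V.erase i) = 0 := by simp [cutWeight]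
    have hVa : cutWeight t (V.erase i) ((V.erase i).erase a) = emodProd M (d a + d i) := by
      rw [← sdiff_singleton_eq_erase a, cutWeight_sdiff ht.symm (singleton_subset_iff.2 ha'), hR]
    rw [← cutWeight_sdiff (splitWeight_comm ht.symm) (singleton_subset_iff.2 hi),
      sdiff_singleton_eq_erase, cutWeight_splitWeight_of_mem_of_notMem hab ht.symm ha hb ha'
      (notMem_erase _ _), hV', hVa]
    simpa using hc.add_mul_eq_right
  · rw [cutWeight_splitWeight_of_notMem hab ht.symm ha hb (by simpa using Ne.symm hia)
      (by simpa using Ne.symm hib), ht.cutWeight_singleton_eq i (mem_erase.2 ⟨hib, hi⟩),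
      Function.update_of_ne hia]

theorem IsCutWeighting.le_cutWeight_splitWeight
    (ht : IsCutWeighting M (V.erase b) (Function.update d a (d a + d b)) t)
    (hc : IsSplitCoeffs M (d a) (d b) α δ) (hab : a ≠ b) (ha : a ∈ V) (hb : b ∈ V)
    {I : Finset ι} (hI : I ⊆ V) (hbI : b ∉ I) :
    (emodProd M (∑ i ∈ I, d i) : ℚ) ≤ cutWeight (splitWeight a b α δ t) V I := by
  have hIb : I ⊆ V.erase b := fun x hx => mem_erase.2 ⟨fun h => hbI (h ▸ hx), hI hx⟩
  by_cases haI : a ∈ I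
  · set x := ∑ i ∈ I.erase a, d i
    have hcutI : (emodProd M (x + d a + d b) : ℚ) ≤ cutWeight t (V.erase b) I := by
      have := ht.le_cutWeight I hIb
      rwa [sum_update_of_mem haI, sdiff_singleton_eq_erase, add_comm, ← add_assoc] at this
    have hcutJ : (emodProd M x : ℚ) ≤ cutWeight t (V.erase b) (I.erase a) := by
      have := ht.le_cutWeight (I.erase a) ((erase_subset _ _).trans hIb)
      rwa [sum_update_of_notMem (notMem_erase _ _)] at this
    rw [cutWeight_splitWeight_of_mem_of_notMem hab ht.symm ha hb haI hbI, ← add_sum_erase I d haI,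
      add_comm]
    linarith [hc.le_add_mul x, mul_le_mul_of_nonneg_left hcutI hc.α_nonneg,
      mul_le_mul_of_nonneg_left hcutJ (sub_nonneg.2 hc.α_le_one)]
  · rw [cutWeight_splitWeight_of_notMem hab ht.symm ha hb haI hbI]
    simpa [sum_update_of_notMem haI] using ht.le_cutWeight I hIb

theorem IsCutWeighting.split (hM : 0 < M) (hab : a ≠ b) (ha : a ∈ V) (hb : b ∈ V)
    (hV : M ∣ ∑ i ∈ V, d i)
    (ht : IsCutWeighting M (V.erase b) (Function.update d a (d a + d b)) t) :
    ∃ t, IsCutWeighting M V d t := by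
  obtain ⟨α, δ, hc⟩ := exists_isSplitCoeffs hM (d a) (d b)
  have hsymm := splitWeight_comm (a := a) (b := b) (α := α) (δ := δ) ht.symm
  exact ⟨splitWeight a b α δ t,
    splitWeight_nonneg hc.α_nonneg hc.α_le_one hc.δ_nonneg ht.nonneg, hsymm,
    splitWeight_self hab ht.diag, fun i => ht.cutWeight_splitWeight_singleton hc hab ha hb,
    le_cutWeight_of_notMem hsymm hV b fun I => ht.le_cutWeight_splitWeight hc hab ha hb⟩

theorem exists_isCutWeighting (hM : 0 < M) (V : Finset ι) (d : ι → ℤ) (hV : M ∣ ∑ i ∈ V, d i) :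
    ∃ t, IsCutWeighting M V d t := by
  induction V using Finset.strongInduction generalizing d with
  | H V ih =>
    by_cases hcard : V.card ≤ 1
    · exact ⟨0, isCutWeighting_zero_of_card_le_one hV hcard⟩
    obtain ⟨a, ha, b, hb, hab⟩ := one_lt_card.1 (not_le.1 hcard)
    obtain ⟨t, ht⟩ := ih (V.erase b) (erase_ssubset hb) (Function.update d a (d a + d b))
      (by rwa [sum_erase_update_add hab ha hb])
    exact ht.split hM hab ha hb hV

end Existence

theorem cutWeight_univ_eq_sum_sum_ite {ι : Type*} [Fintype ι] [DecidableEq ι]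
    {t : ι → ι → ℚ} (ht : ∀ i j, t i j = t j i) (I : Finset ι) :
    cutWeight t univ I =
      ∑ i, ∑ j, if (i ∈ I ∧ j ∉ I) ∨ (j ∈ I ∧ i ∉ I) then t i j / 2 else 0 := by
  have hsplit : ∀ i j, (if (i ∈ I ∧ j ∉ I) ∨ (j ∈ I ∧ i ∉ I) then t i j / 2 else 0) =
      (if i ∈ I ∧ j ∉ I then t i j / 2 else 0) + (if j ∈ I ∧ i ∉ I then t j i / 2 else 0) := by
    intro i j
    by_cases hi : i ∈ I <;> by_cases hj : j ∈ I <;> simp [hi, hj, ht i j]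
  have hcut : ∑ i, ∑ j, (if i ∈ I ∧ j ∉ I then t i j / 2 else 0) = cutWeight t univ I / 2 := by
    rw [cutWeight, sum_div, ← Fintype.sum_ite_mem I]
    refine sum_congr rfl fun i _ => ?_
    by_cases hi : i ∈ I <;> simp [hi, sum_filter, sdiff_eq_filter, sum_div, apply_ite (· / (2 : ℚ))]
  simp only [hsplit, sum_add_distrib]
  rw [sum_comm (f := fun i j => if j ∈ I ∧ i ∉ I then t j i / 2 else 0), hcut]
  ring

theorem sum_cutWeight_smul_psi_sub_mem_keelRels {n : ℕ} {t : Fin n → Fin n → ℚ}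
    (ht : ∀ i j, t i j = t j i) (hdiag : ∀ i, t i i = 0) :
    ∑ i, cutWeight t univ {i} • psi i - ∑ I ∈ reps n, cutWeight t univ I • delta I ∈
      keelRels n := by
  have hmem : ∑ i, ∑ j, (t i j / 2) • (psi i + psi j -
      ∑ I ∈ (reps n).filter (fun I => (i ∈ I ∧ j ∉ I) ∨ (j ∈ I ∧ i ∉ I)), delta I) ∈
        keelRels n := by
    refine Submodule.sum_mem _ fun i _ => Submodule.sum_mem _ fun j _ => ?_
    rcases eq_or_ne i j with rfl | hij
    · simp [hdiag]
    · exact Submodule.smul_mem _ _ (Submodule.subset_span ⟨i, j, hij, rfl⟩)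
  convert hmem using 1
  have hpsi : ∑ i, ∑ j, (t i j / 2) • psi j = ∑ i, ∑ j, (t i j / 2) • psi i := by
    rw [sum_comm]
    simp only [ht]
  have hdelta : ∑ i, ∑ j, (t i j / 2) •
      ∑ I ∈ (reps n).filter (fun I => (i ∈ I ∧ j ∉ I) ∨ (j ∈ I ∧ i ∉ I)), delta I =
      ∑ I ∈ reps n, cutWeight t univ I • delta I := by
    simp only [smul_sum, sum_filter, smul_ite, smul_zero]
    rw [sum_congr rfl fun i (_ : i ∈ univ) => sum_comm, sum_comm]
    refine sum_congr rfl fun I _ => ?_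
    simp only [cutWeight_univ_eq_sum_sum_ite ht I, sum_smul, ite_smul, zero_smul]
  simp only [smul_sub, smul_add, sum_add_distrib, sum_sub_distrib, hpsi, hdelta,
    cutWeight_singleton hdiag, sum_smul]
  rw [← sum_add_distrib]
  refine congrArg (· - _) (sum_congr rfl fun i _ => ?_)
  rw [← sum_add_distrib]
  simp_rw [← add_smul, add_halves]

theorem D_effective_general {n : ℕ} (m : ℕ) (hm : 2 ≤ m) (d : Fin n → ℤ)
    (hdiv : (m : ℤ) ∣ ∑ i, d i) :
    ∃ c : Finset (Fin n) → ℚ, (∀ I ∈ reps n, 0 ≤ c I) ∧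
      ((∑ i, (((d i % (m : ℤ)) * (((m : ℤ) - d i) % (m : ℤ)) : ℤ) : ℚ) • psi i -
          ∑ I ∈ reps n,
            (((((∑ i ∈ I, d i) % (m : ℤ)) * ((∑ j ∈ Iᶜ, d j) % (m : ℤ))) : ℤ) : ℚ) • delta I) -
        ∑ I ∈ reps n, c I • delta I) ∈ keelRels n := by
  obtain ⟨t, ht⟩ := exists_isCutWeighting (by omega : (0 : ℤ) < m) univ d hdiv
  refine ⟨fun I => cutWeight t univ I - emodProd m (∑ i ∈ I, d i),
    fun I _ => sub_nonneg.2 (ht.le_cutWeight I (subset_univ I)), ?_⟩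
  have hψ : ∀ i, d i % m * ((m - d i) % m) = emodProd m (d i) := fun i => by
    rw [emodProd, (Int.modEq_iff_dvd.2 ⟨-1, by ring⟩ : (m : ℤ) - d i ≡ -d i [ZMOD m]).eq]
  have hΔ : ∀ I : Finset (Fin n),
      (∑ i ∈ I, d i) % m * ((∑ j ∈ Iᶜ, d j) % m) = emodProd m (∑ i ∈ I, d i) := fun I => by
    refine congrArg _ (Int.ModEq.eq (Int.modEq_iff_dvd.2 ?_))
    rw [← neg_add', sum_add_sum_compl]
    exact dvd_neg.2 hdiv
  simp only [hψ, hΔ, ← ht.cutWeight_singleton_eq _ (mem_univ _), sub_sub, ← sum_add_distrib,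
    ← add_smul, add_sub_cancel]
  exact sum_cutWeight_smul_psi_sub_mem_keelRels ht.symm ht.diag

/-- The divisor `D((d_1,…,d_n), m) = Σ ⟨d_i⟩_m ⟨m - d_i⟩_m ψ_i - Σ ⟨d(I)⟩_m ⟨d(J)⟩_m Δ_{I,J}`,
with `1 ≤ d_i ≤ m - 1` and `m ∣ Σ d_i`, is ℚ-linearly equivalent (modulo the Keel relations)
to an effective combination of the boundary divisors. -/
theorem D_effective {n : ℕ} (hn : 4 ≤ n) (m : ℕ) (hm : 2 ≤ m) (d : Fin n → ℤ)
    (hd : ∀ i, 1 ≤ d i ∧ d i ≤ (m : ℤ) - 1) (hdiv : (m : ℤ) ∣ ∑ i, d i) :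
    ∃ c : Finset (Fin n) → ℚ, (∀ I ∈ reps n, 0 ≤ c I) ∧
      ((∑ i, (((d i % (m : ℤ)) * (((m : ℤ) - d i) % (m : ℤ)) : ℤ) : ℚ) • psi i -
          ∑ I ∈ reps n,
            (((((∑ i ∈ I, d i) % (m : ℤ)) * ((∑ j ∈ Iᶜ, d j) % (m : ℤ))) : ℤ) : ℚ) • delta I) -
        ∑ I ∈ reps n, c I • delta I) ∈ keelRels n :=
  D_effective_general m hm d hdiv
end

section
/- Let m ≥ 3, let d_1,…,d_n satisfy 1 ≤ dᵢ ≤ m−1 and m | Σ dᵢ. Suppose [n] admits exactly two m-partitions A ⊔ B and C ⊔ D (an m-partition is a proper partition with both parts m-divisible). Then A ⊔ B and C ⊔ D are transverse: all four intersections A∩C, A∩D, B∩C, B∩D are nonempty. -/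
/-!
If `X ∩ Y = ∅` for parts `X`, `Y` of the two `m`-partitions, then `X ∪ Y` is again `m`-divisible,
and it is a proper part: its complement is nonempty because `Y ≠ Xᶜ`, and both it and its
complement have at least two elements because no single `dᵢ` is divisible by `m`. As `X ∪ Y`
strictly contains `X` and `Y` and meets both, it differs from `X`, `Y`, `Xᶜ` and `Yᶜ`, giving a
third `m`-partition. Complementing either partition reduces the four intersections to `X ∩ Y`.
-/

open Finset

lemma two_le_card_of_dvd_sum {ι : Type*} {m : ℤ} {d : ι → ℤ} (hd : ∀ i, 1 ≤ d i ∧ d i ≤ m - 1)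
    {I : Finset ι} (hI : I.Nonempty) (hIm : m ∣ ∑ i ∈ I, d i) : 2 ≤ #I := by
  by_contra h
  obtain ⟨i, rfl⟩ := (card_eq_one (s := I)).mp (by have := hI.card_pos; omega)
  rw [sum_singleton] at hIm
  have := Int.eq_zero_of_dvd_of_nonneg_of_lt (by linarith [hd i]) (by linarith [hd i]) hIm
  linarith [hd i]

variable {ι : Type*} [Fintype ι] [DecidableEq ι] {m : ℤ} {d : ι → ℤ}

lemma dvd_sum_compl (hdiv : m ∣ ∑ i, d i) {I : Finset ι} (hIm : m ∣ ∑ i ∈ I, d i) :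
    m ∣ ∑ i ∈ Iᶜ, d i :=
  (dvd_add_left hIm).mp (sum_compl_add_sum I d ▸ hdiv)

lemma compl_union_nonempty {X Y : Finset ι} (hXY : Disjoint X Y) (hne : Y ≠ Xᶜ) :
    (X ∪ Y)ᶜ.Nonempty := by
  by_contra h
  rw [not_nonempty_iff_eq_empty, compl_eq_empty_iff] at h
  exact hne (IsCompl.compl_eq ⟨hXY, codisjoint_iff.mpr h⟩).symm

variable (m d) in
/-- Properness is stated as `2 ≤ #I ∧ 2 ≤ #Iᶜ`, as in the theorem; for nonempty parts this is
automatic by `two_le_card_of_dvd_sum`. -/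
def IsMPart (I : Finset ι) : Prop :=
  2 ≤ #I ∧ 2 ≤ #Iᶜ ∧ m ∣ ∑ i ∈ I, d i

namespace IsMPart

lemma nonempty {I : Finset ι} (hI : IsMPart m d I) : I.Nonempty :=
  card_pos.mp (by have := hI.1; omega)

lemma compl (hdiv : m ∣ ∑ i, d i) {I : Finset ι} (hI : IsMPart m d I) : IsMPart m d Iᶜ :=
  ⟨hI.2.1, by simpa using hI.1, dvd_sum_compl hdiv hI.2.2⟩

lemma union (hd : ∀ i, 1 ≤ d i ∧ d i ≤ m - 1) (hdiv : m ∣ ∑ i, d i) {X Y : Finset ι}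
    (hX : IsMPart m d X) (hY : IsMPart m d Y) (hXY : Disjoint X Y) (hne : Y ≠ Xᶜ) :
    IsMPart m d (X ∪ Y) := by
  have hdvd : m ∣ ∑ i ∈ X ∪ Y, d i := by
    rw [sum_union hXY]
    exact dvd_add hX.2.2 hY.2.2
  exact ⟨two_le_card_of_dvd_sum hd (hX.nonempty.mono subset_union_left) hdvd,
    two_le_card_of_dvd_sum hd (compl_union_nonempty hXY hne) (dvd_sum_compl hdiv hdvd), hdvd⟩

end IsMPart

variable (m d) in
structure AreOnlyMPartitions (X Y : Finset ι) : Prop where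
  isMPart_left : IsMPart m d X
  isMPart_right : IsMPart m d Y
  ne : Y ≠ X
  ne_compl : Y ≠ Xᶜ
  eq_of_isMPart : ∀ I, IsMPart m d I → I = X ∨ I = Xᶜ ∨ I = Y ∨ I = Yᶜ

namespace AreOnlyMPartitions

variable {X Y : Finset ι}

lemma symm (h : AreOnlyMPartitions m d X Y) : AreOnlyMPartitions m d Y X where
  isMPart_left := h.isMPart_right
  isMPart_right := h.isMPart_left
  ne := h.ne.symm
  ne_compl := fun h' => h.ne_compl (eq_compl_comm.mp h')
  eq_of_isMPart I hI := by have := h.eq_of_isMPart I hI; tauto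

lemma compl_left (hdiv : m ∣ ∑ i, d i) (h : AreOnlyMPartitions m d X Y) :
    AreOnlyMPartitions m d Xᶜ Y where
  isMPart_left := h.isMPart_left.compl hdiv
  isMPart_right := h.isMPart_right
  ne := h.ne_compl
  ne_compl := by rw [compl_compl]; exact h.ne
  eq_of_isMPart I hI := by rw [compl_compl]; have := h.eq_of_isMPart I hI; tauto

lemma compl_right (hdiv : m ∣ ∑ i, d i) (h : AreOnlyMPartitions m d X Y) :
    AreOnlyMPartitions m d X Yᶜ :=
  (h.symm.compl_left hdiv).symm

lemma inter_nonempty (hd : ∀ i, 1 ≤ d i ∧ d i ≤ m - 1) (hdiv : m ∣ ∑ i, d i)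
    (h : AreOnlyMPartitions m d X Y) : (X ∩ Y).Nonempty := by
  by_contra hXY
  rw [not_nonempty_iff_eq_empty, ← disjoint_iff_inter_eq_empty] at hXY
  have hX := h.isMPart_left.nonempty
  have hY := h.isMPart_right.nonempty
  rcases h.eq_of_isMPart _ (h.isMPart_left.union hd hdiv h.isMPart_right hXY h.ne_compl)
    with hU | hU | hU | hU
  · exact hY.ne_empty (hXY.eq_bot_of_ge (union_eq_left.mp hU))
  · exact hX.ne_empty (disjoint_compl_right.eq_bot_of_le (hU ▸ subset_union_left))
  · exact hX.ne_empty (hXY.eq_bot_of_le (union_eq_right.mp hU))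
  · exact hY.ne_empty (disjoint_compl_right.eq_bot_of_le (hU ▸ subset_union_right))

end AreOnlyMPartitions

theorem two_m_partitions_transverse_general {n : ℕ} (m : ℕ) (d : Fin n → ℤ)
    (hd : ∀ i, 1 ≤ d i ∧ d i ≤ (m : ℤ) - 1) (hdiv : (m : ℤ) ∣ ∑ i, d i)
    (A C : Finset (Fin n))
    (hA : 2 ≤ A.card ∧ 2 ≤ Aᶜ.card) (hAm : (m : ℤ) ∣ ∑ i ∈ A, d i)
    (hC : 2 ≤ C.card ∧ 2 ≤ Cᶜ.card) (hCm : (m : ℤ) ∣ ∑ i ∈ C, d i)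
    (hdist : C ≠ A ∧ C ≠ Aᶜ)
    (honly : ∀ I : Finset (Fin n), 2 ≤ I.card → 2 ≤ Iᶜ.card → (m : ℤ) ∣ ∑ i ∈ I, d i →
      I = A ∨ I = Aᶜ ∨ I = C ∨ I = Cᶜ) :
    (A ∩ C).Nonempty ∧ (A ∩ Cᶜ).Nonempty ∧ (Aᶜ ∩ C).Nonempty ∧ (Aᶜ ∩ Cᶜ).Nonempty := by
  have h : AreOnlyMPartitions (m : ℤ) d A C :=
    ⟨⟨hA.1, hA.2, hAm⟩, ⟨hC.1, hC.2, hCm⟩, hdist.1, hdist.2,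
      fun I hI => honly I hI.1 hI.2.1 hI.2.2⟩
  exact ⟨h.inter_nonempty hd hdiv, (h.compl_right hdiv).inter_nonempty hd hdiv,
    (h.compl_left hdiv).inter_nonempty hd hdiv,
    ((h.compl_left hdiv).compl_right hdiv).inter_nonempty hd hdiv⟩

/-- Suppose `m ≥ 3`, `1 ≤ d_i ≤ m - 1`, `m ∣ Σ d_i`, and `[n]` admits exactly two
`m`-partitions `A ⊔ Aᶜ` and `C ⊔ Cᶜ` (an `m`-partition is a proper partition with both parts
`m`-divisible). Then the two `m`-partitions are transverse: `A ∩ C`, `A ∩ Cᶜ`, `Aᶜ ∩ C` and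
`Aᶜ ∩ Cᶜ` are all nonempty. -/
theorem two_m_partitions_transverse {n : ℕ} (m : ℕ) (hm : 3 ≤ m) (d : Fin n → ℤ)
    (hd : ∀ i, 1 ≤ d i ∧ d i ≤ (m : ℤ) - 1) (hdiv : (m : ℤ) ∣ ∑ i, d i)
    (A C : Finset (Fin n))
    (hA : 2 ≤ A.card ∧ 2 ≤ Aᶜ.card) (hAm : (m : ℤ) ∣ ∑ i ∈ A, d i)
    (hC : 2 ≤ C.card ∧ 2 ≤ Cᶜ.card) (hCm : (m : ℤ) ∣ ∑ i ∈ C, d i)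
    (hdist : C ≠ A ∧ C ≠ Aᶜ)
    (honly : ∀ I : Finset (Fin n), 2 ≤ I.card → 2 ≤ Iᶜ.card → (m : ℤ) ∣ ∑ i ∈ I, d i →
      I = A ∨ I = Aᶜ ∨ I = C ∨ I = Cᶜ) :
    (A ∩ C).Nonempty ∧ (A ∩ Cᶜ).Nonempty ∧ (Aᶜ ∩ C).Nonempty ∧ (Aᶜ ∩ Cᶜ).Nonempty :=
  two_m_partitions_transverse_general m d hd hdiv A C hA hAm hC hCm hdist honly
end

section
/- Let A ⊔ B and C ⊔ D be two distinct proper partitions of [n] that are not transverse. Then (up to swapping labels within each partition) one of the four parts of one partition is contained in a part of the other, and the three sets obtained as A∩C, A∩D (or the analogous configuration) together with the complementary part give a decomposition of [n] into three nonempty pieces; moreover if both partitions are m-partitions with respect to a degree function d, then all three pieces can be grouped to yield at least three distinct m-partitions of [n], provided each piece is nonempty. -/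
/-!
If the partitions are not transverse, some part `X` of the first misses some part of the second,
so `X` lies in the other part `Y` of the second, strictly because the partitions are distinct.
Then `X`, `Y \ X` and `Yᶜ` are three nonempty pieces, each of degree sum divisible by `m`, and
splitting off any one of them from the union of the other two gives three distinct `m`-partitions:
two different splittings are told apart by a point of one piece and a point of the third.
-/

open Finset

section

variable {α R : Type*} [Fintype α] [DecidableEq α] [NonUnitalRing R]

/-- `P ⊔ Pᶜ` is a proper `m`-partition of `α` for the degree function `d`. -/
def IsDvdPartition (m : R) (d : α → R) (P : Finset α) : Prop :=
  P.Nonempty ∧ Pᶜ.Nonempty ∧ m ∣ ∑ i ∈ P, d i ∧ m ∣ ∑ i ∈ Pᶜ, d i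

theorem dvd_sum_compl_s14 {m : R} {d : α → R} {S : Finset α} (hS : m ∣ ∑ i ∈ S, d i)
    (htot : m ∣ ∑ i, d i) : m ∣ ∑ i ∈ Sᶜ, d i :=
  (dvd_add_left hS).mp (sum_compl_add_sum S d ▸ htot)

theorem IsDvdPartition.of_dvd {m : R} {d : α → R} {P : Finset α} (hP : P.Nonempty)
    (hPc : Pᶜ.Nonempty) (hdP : m ∣ ∑ i ∈ P, d i) (htot : m ∣ ∑ i, d i) :
    IsDvdPartition m d P :=
  ⟨hP, hPc, hdP, dvd_sum_compl_s14 hdP htot⟩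

theorem ne_and_ne_compl_of_separates {P Q : Finset α} {x y : α} (hxP : x ∈ P) (hyP : y ∉ P)
    (hxQ : x ∉ Q) (hyQ : y ∉ Q) : P ≠ Q ∧ P ≠ Qᶜ :=
  ⟨by rintro rfl; exact hxQ hxP, by rintro rfl; exact hyP (mem_compl.mpr hyQ)⟩

theorem exists_three_isDvdPartition {m : R} {d : α → R} {X Z : Finset α} (hXZ : Disjoint X Z)
    (hX : X.Nonempty) (hZ : Z.Nonempty) (hY : (X ∪ Z)ᶜ.Nonempty)
    (hdX : m ∣ ∑ i ∈ X, d i) (hdZ : m ∣ ∑ i ∈ Z, d i) (htot : m ∣ ∑ i, d i) :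
    ∃ P₁ P₂ P₃ : Finset α,
      IsDvdPartition m d P₁ ∧ IsDvdPartition m d P₂ ∧ IsDvdPartition m d P₃ ∧
        (P₁ ≠ P₂ ∧ P₁ ≠ P₂ᶜ) ∧ (P₁ ≠ P₃ ∧ P₁ ≠ P₃ᶜ) ∧ (P₂ ≠ P₃ ∧ P₂ ≠ P₃ᶜ) := by
  obtain ⟨x, hx⟩ := hX
  obtain ⟨z, hz⟩ := hZ
  obtain ⟨y, hy⟩ := hY
  have hxZ : x ∉ Z := disjoint_left.mp hXZ hx
  have hzX : z ∉ X := disjoint_right.mp hXZ hz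
  have hxY : x ∉ (X ∪ Z)ᶜ := by simp [hx]
  have hzY : z ∉ (X ∪ Z)ᶜ := by simp [hz]
  obtain ⟨hyX, hyZ⟩ : y ∉ X ∧ y ∉ Z := by simpa using hy
  have hdXZ : m ∣ ∑ i ∈ X ∪ Z, d i := by rw [sum_union hXZ]; exact dvd_add hdX hdZ
  refine ⟨X, Z, (X ∪ Z)ᶜ, .of_dvd ⟨x, hx⟩ ⟨z, mem_compl.mpr hzX⟩ hdX htot,
    .of_dvd ⟨z, hz⟩ ⟨x, mem_compl.mpr hxZ⟩ hdZ htot,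
    .of_dvd ⟨y, hy⟩ ⟨x, by simp [hx]⟩ (dvd_sum_compl_s14 hdXZ htot) htot,
    ne_and_ne_compl_of_separates hx hyX hxZ hyZ, ne_and_ne_compl_of_separates hx hzX hxY hzY,
    ne_and_ne_compl_of_separates hz hxZ hzY hxY⟩

theorem exists_three_isDvdPartition_of_ssubset {m : R} {d : α → R} {X Y : Finset α}
    (hXY : X ⊂ Y) (hX : X.Nonempty) (hYc : Yᶜ.Nonempty)
    (hdX : m ∣ ∑ i ∈ X, d i) (hdY : m ∣ ∑ i ∈ Y, d i) (htot : m ∣ ∑ i, d i) :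
    ∃ P₁ P₂ P₃ : Finset α,
      IsDvdPartition m d P₁ ∧ IsDvdPartition m d P₂ ∧ IsDvdPartition m d P₃ ∧
        (P₁ ≠ P₂ ∧ P₁ ≠ P₂ᶜ) ∧ (P₁ ≠ P₃ ∧ P₁ ≠ P₃ᶜ) ∧ (P₂ ≠ P₃ ∧ P₂ ≠ P₃ᶜ) := by
  obtain ⟨y, hyY, hyX⟩ := exists_of_ssubset hXY
  exact exists_three_isDvdPartition (disjoint_compl_right_iff.mpr hXY.subset) hX hYc
    ⟨y, by simp [hyX, hyY]⟩ hdX (dvd_sum_compl_s14 hdY htot) htot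

theorem ssubset_compl_of_disjoint {X Y : Finset α} (h : Disjoint X Y) (hne : Y ≠ Xᶜ) :
    X ⊂ Yᶜ :=
  (le_compl_iff_disjoint_right.mpr h).lt_of_ne (eq_compl_comm.not.mpr hne)

theorem ssubset_or_of_not_transverse {A C : Finset α} (hdist : C ≠ A ∧ C ≠ Aᶜ)
    (hnt : ¬ ((A ∩ C).Nonempty ∧ (A ∩ Cᶜ).Nonempty ∧
              (Aᶜ ∩ C).Nonempty ∧ (Aᶜ ∩ Cᶜ).Nonempty)) :
    A ⊂ C ∨ A ⊂ Cᶜ ∨ Aᶜ ⊂ C ∨ Aᶜ ⊂ Cᶜ := by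
  simp only [not_and_or, not_nonempty_iff_eq_empty, ← disjoint_iff_inter_eq_empty] at hnt
  rcases hnt with h | h | h | h
  · exact .inr <| .inl <| ssubset_compl_of_disjoint h hdist.2
  · exact .inl <| compl_compl C ▸ ssubset_compl_of_disjoint h (by simpa using hdist.1)
  · exact .inr <| .inr <| .inr <| ssubset_compl_of_disjoint h (by simpa using hdist.1)
  · have hne : Cᶜ ≠ Aᶜᶜ := by
      rw [compl_compl]; exact fun h ↦ hdist.2 (eq_compl_comm.mpr h.symm)
    exact .inr <| .inr <| .inl <| compl_compl C ▸ ssubset_compl_of_disjoint h hne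

end

theorem non_transverse_partitions_general {n : ℕ} (m : ℕ) (d : Fin n → ℤ)
    (A C : Finset (Fin n))
    (hA : 2 ≤ A.card ∧ 2 ≤ Aᶜ.card) (hC : 2 ≤ C.card ∧ 2 ≤ Cᶜ.card)
    (hdist : C ≠ A ∧ C ≠ Aᶜ)
    (hnt : ¬ ((A ∩ C).Nonempty ∧ (A ∩ Cᶜ).Nonempty ∧
              (Aᶜ ∩ C).Nonempty ∧ (Aᶜ ∩ Cᶜ).Nonempty)) :
    (A ⊂ C ∨ A ⊂ Cᶜ ∨ Aᶜ ⊂ C ∨ Aᶜ ⊂ Cᶜ) ∧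
    ((m : ℤ) ∣ ∑ i ∈ A, d i → (m : ℤ) ∣ ∑ i ∈ C, d i → (m : ℤ) ∣ ∑ i, d i →
      ∃ P₁ P₂ P₃ : Finset (Fin n),
        (P₁.Nonempty ∧ P₁ᶜ.Nonempty ∧
          (m : ℤ) ∣ ∑ i ∈ P₁, d i ∧ (m : ℤ) ∣ ∑ i ∈ P₁ᶜ, d i) ∧
        (P₂.Nonempty ∧ P₂ᶜ.Nonempty ∧
          (m : ℤ) ∣ ∑ i ∈ P₂, d i ∧ (m : ℤ) ∣ ∑ i ∈ P₂ᶜ, d i) ∧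
        (P₃.Nonempty ∧ P₃ᶜ.Nonempty ∧
          (m : ℤ) ∣ ∑ i ∈ P₃, d i ∧ (m : ℤ) ∣ ∑ i ∈ P₃ᶜ, d i) ∧
        (P₁ ≠ P₂ ∧ P₁ ≠ P₂ᶜ) ∧ (P₁ ≠ P₃ ∧ P₁ ≠ P₃ᶜ) ∧ (P₂ ≠ P₃ ∧ P₂ ≠ P₃ᶜ)) := by
  have hAne : A.Nonempty := card_pos.mp (by omega)
  have hAcne : Aᶜ.Nonempty := card_pos.mp (by omega)
  have hCcc : Cᶜᶜ.Nonempty := (compl_compl C).symm ▸ card_pos.mp (by omega)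
  have hCcne : Cᶜ.Nonempty := card_pos.mp (by omega)
  have hsub := ssubset_or_of_not_transverse hdist hnt
  refine ⟨hsub, fun hdA hdC htot => ?_⟩
  have hdAc := dvd_sum_compl_s14 hdA htot
  have hdCc := dvd_sum_compl_s14 hdC htot
  rcases hsub with h | h | h | h
  · exact exists_three_isDvdPartition_of_ssubset h hAne hCcne hdA hdC htot
  · exact exists_three_isDvdPartition_of_ssubset h hAne hCcc hdA hdCc htot
  · exact exists_three_isDvdPartition_of_ssubset h hAcne hCcne hdAc hdC htot
  · exact exists_three_isDvdPartition_of_ssubset h hAcne hCcc hdAc hdCc htot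

/-- Let `A ⊔ Aᶜ` and `C ⊔ Cᶜ` be two distinct proper partitions of `[n]` that are not
transverse. Then one part of one partition is strictly contained in a part of the other;
moreover, if both partitions are `m`-partitions with respect to a degree function `d` (with
`m` dividing the total degree), then there exist at least three distinct partitions of `[n]`
into two nonempty `m`-divisible pieces. -/
theorem non_transverse_partitions {n : ℕ} (m : ℕ) (hm : 2 ≤ m) (d : Fin n → ℤ)
    (A C : Finset (Fin n))
    (hA : 2 ≤ A.card ∧ 2 ≤ Aᶜ.card) (hC : 2 ≤ C.card ∧ 2 ≤ Cᶜ.card)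
    (hdist : C ≠ A ∧ C ≠ Aᶜ)
    (hnt : ¬ ((A ∩ C).Nonempty ∧ (A ∩ Cᶜ).Nonempty ∧
              (Aᶜ ∩ C).Nonempty ∧ (Aᶜ ∩ Cᶜ).Nonempty)) :
    (A ⊂ C ∨ A ⊂ Cᶜ ∨ Aᶜ ⊂ C ∨ Aᶜ ⊂ Cᶜ) ∧
    ((m : ℤ) ∣ ∑ i ∈ A, d i → (m : ℤ) ∣ ∑ i ∈ C, d i → (m : ℤ) ∣ ∑ i, d i →
      ∃ P₁ P₂ P₃ : Finset (Fin n),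
        (P₁.Nonempty ∧ P₁ᶜ.Nonempty ∧
          (m : ℤ) ∣ ∑ i ∈ P₁, d i ∧ (m : ℤ) ∣ ∑ i ∈ P₁ᶜ, d i) ∧
        (P₂.Nonempty ∧ P₂ᶜ.Nonempty ∧
          (m : ℤ) ∣ ∑ i ∈ P₂, d i ∧ (m : ℤ) ∣ ∑ i ∈ P₂ᶜ, d i) ∧
        (P₃.Nonempty ∧ P₃ᶜ.Nonempty ∧
          (m : ℤ) ∣ ∑ i ∈ P₃, d i ∧ (m : ℤ) ∣ ∑ i ∈ P₃ᶜ, d i) ∧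
        (P₁ ≠ P₂ ∧ P₁ ≠ P₂ᶜ) ∧ (P₁ ≠ P₃ ∧ P₁ ≠ P₃ᶜ) ∧ (P₂ ≠ P₃ ∧ P₂ ≠ P₃ᶜ)) :=
  non_transverse_partitions_general m d A C hA hC hdist hnt
end

section
/- Let m ≥ 2. Suppose w₁ and w₂ are weightings of complete graphs on disjoint sets S₁ and S₂ with [n] = S₁ ⊔ S₂, and let w be the weighting of the complete graph on [n] equal to w₁ on edges inside S₁, w₂ on edges inside S₂, and 0 on edges between S₁ and S₂. If for every proper partition of Sₜ (t = 1,2) into I ⊔ J the wₜ-flow across it is at least ⟨d(I)⟩_m⟨d(J)⟩_m, and the labels satisfy m | d(S₁), then for every partition I ⊔ J of [n] the w-flow across I ⊔ J is at least ⟨d(I)⟩_m⟨d(J)⟩_m. -/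
/-!
Crossing edges carry weight `0`, so the `w`-flow across `I ⊔ Iᶜ` is the `w₁`-flow across
`(I ∩ S₁) ⊔ (S₁ \ I)` plus the `w₂`-flow across `(I ∩ S₂) ⊔ (S₂ \ I)`. As `m` divides `d(S₁)`,
`d(S₂)` and `d([n])`, every bound involved has the form `f(d(A))` with
`f(r) = ⟨r⟩_m ⟨-r⟩_m = ⟨r⟩_m (m - ⟨r⟩_m)`, which vanishes on improper partitions, and `f` is
subadditive.
-/

open Finset

namespace Int

theorem sub_emod_of_dvd {m s : ℤ} (hs : m ∣ s) (x : ℤ) : (s - x) % m = -x % m := by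
  have h := (modEq_zero_iff_dvd.2 hs).sub_right x
  rwa [zero_sub] at h

theorem emod_mul_neg_emod {m : ℤ} (hm : 0 < m) (x : ℤ) :
    x % m * (-x % m) = x % m * (m - x % m) := by
  rw [neg_emod]
  split_ifs with h
  · simp [emod_eq_zero_of_dvd h]
  · rw [natCast_natAbs, abs_of_pos hm]

theorem emod_mul_neg_emod_add_le {m : ℤ} (hm : 0 < m) (a b : ℤ) :
    (a + b) % m * (-(a + b) % m) ≤ a % m * (-a % m) + b % m * (-b % m) := by
  rw [emod_mul_neg_emod hm, emod_mul_neg_emod hm, emod_mul_neg_emod hm, add_emod]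
  have ha := emod_nonneg a hm.ne'
  have hb := emod_nonneg b hm.ne'
  have ha' := emod_lt_of_pos a hm
  have hb' := emod_lt_of_pos b hm
  generalize a % m = r at *
  generalize b % m = s at *
  rcases lt_or_ge (r + s) m with h | h
  · rw [emod_eq_of_lt (by omega) h]
    nlinarith
  -- `t ↦ t (m - t)` is symmetric under `t ↦ m - t`, which turns this case into the first one.
  · rw [← sub_emod_right, emod_eq_of_lt (by omega) (by omega)]
    nlinarith

end Int

variable {α R : Type*} [DecidableEq α]

theorem Finset.sum_sum_compl_ite_mem_and [Fintype α] [AddCommMonoid R] (I S : Finset α)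
    (v : α → α → R) :
    ∑ i ∈ I, ∑ j ∈ Iᶜ, (if i ∈ S ∧ j ∈ S then v i j else 0) =
      ∑ i ∈ I ∩ S, ∑ j ∈ S \ I, v i j := by
  simp [ite_and, sum_ite_mem, sdiff_eq_inter_compl, inter_comm]

theorem Finset.sum_sum_compl_of_glue [Fintype α] [AddCommMonoid R] {S₁ S₂ : Finset α}
    (hdisj : Disjoint S₁ S₂) {w₁ w₂ w : α → α → R}
    (hw : ∀ i j, w i j =
      if i ∈ S₁ ∧ j ∈ S₁ then w₁ i j else if i ∈ S₂ ∧ j ∈ S₂ then w₂ i j else 0)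
    (I : Finset α) :
    ∑ i ∈ I, ∑ j ∈ Iᶜ, w i j =
      ∑ i ∈ I ∩ S₁, ∑ j ∈ S₁ \ I, w₁ i j + ∑ i ∈ I ∩ S₂, ∑ j ∈ S₂ \ I, w₂ i j := by
  have hw' : ∀ i j, w i j =
      (if i ∈ S₁ ∧ j ∈ S₁ then w₁ i j else 0) + (if i ∈ S₂ ∧ j ∈ S₂ then w₂ i j else 0) := by
    intro i j
    rw [hw]
    by_cases hi : i ∈ S₁
    · simp [hi, disjoint_left.1 hdisj hi]
    · simp [hi]
  simp only [hw', sum_add_distrib, sum_sum_compl_ite_mem_and]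

theorem Finset.emod_mul_neg_emod_le_sum_sum_sdiff [CommRing R] [LinearOrder R]
    [IsStrictOrderedRing R] {m : ℤ} {S : Finset α} (d : α → ℤ) (v : α → α → R)
    (hS : m ∣ ∑ i ∈ S, d i)
    (h : ∀ I : Finset α, I ⊆ S → I.Nonempty → (S \ I).Nonempty →
      ∑ i ∈ I, ∑ j ∈ S \ I, v i j ≥ (((∑ i ∈ I, d i) % m * ((∑ j ∈ S \ I, d j) % m) : ℤ) : R))
    (I : Finset α) :
    (((∑ i ∈ I ∩ S, d i) % m * (-(∑ i ∈ I ∩ S, d i) % m) : ℤ) : R) ≤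
      ∑ i ∈ I ∩ S, ∑ j ∈ S \ I, v i j := by
  rw [← Int.sub_emod_of_dvd hS, ← sum_sdiff_eq_sub inter_subset_right, sdiff_inter_self_right]
  rcases (I ∩ S).eq_empty_or_nonempty with hI | hI
  · simp [hI]
  rcases (S \ I).eq_empty_or_nonempty with hJ | hJ
  · simp [hJ]
  simpa only [sdiff_inter_self_right] using
    h (I ∩ S) inter_subset_right hI (by rwa [sdiff_inter_self_right])

theorem glued_weighting_flow_general {n : ℕ} (m : ℕ) (hm : 2 ≤ m) (d : Fin n → ℤ)
    (S₁ S₂ : Finset (Fin n)) (hdisj : Disjoint S₁ S₂) (hunion : S₁ ∪ S₂ = univ)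
    (w₁ w₂ w : Fin n → Fin n → ℚ)
    (hw : ∀ i j, w i j =
      if i ∈ S₁ ∧ j ∈ S₁ then w₁ i j else if i ∈ S₂ ∧ j ∈ S₂ then w₂ i j else 0)
    (h₁ : ∀ I : Finset (Fin n), I ⊆ S₁ → I.Nonempty → (S₁ \ I).Nonempty →
      ∑ i ∈ I, ∑ j ∈ S₁ \ I, w₁ i j ≥
        ((((∑ i ∈ I, d i) % (m : ℤ)) * ((∑ j ∈ S₁ \ I, d j) % (m : ℤ)) : ℤ) : ℚ))
    (h₂ : ∀ I : Finset (Fin n), I ⊆ S₂ → I.Nonempty → (S₂ \ I).Nonempty →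
      ∑ i ∈ I, ∑ j ∈ S₂ \ I, w₂ i j ≥
        ((((∑ i ∈ I, d i) % (m : ℤ)) * ((∑ j ∈ S₂ \ I, d j) % (m : ℤ)) : ℤ) : ℚ))
    (hdiv : (m : ℤ) ∣ ∑ i, d i) (hS₁ : (m : ℤ) ∣ ∑ i ∈ S₁, d i) :
    ∀ I : Finset (Fin n),
      ∑ i ∈ I, ∑ j ∈ Iᶜ, w i j ≥
        ((((∑ i ∈ I, d i) % (m : ℤ)) * ((∑ j ∈ Iᶜ, d j) % (m : ℤ)) : ℤ) : ℚ) := by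
  intro I
  have hS₂ : (m : ℤ) ∣ ∑ i ∈ S₂, d i := by
    rw [← hunion, sum_union hdisj] at hdiv
    exact (dvd_add_right hS₁).1 hdiv
  have hI : ∑ i ∈ I, d i = ∑ i ∈ I ∩ S₁, d i + ∑ i ∈ I ∩ S₂, d i := by
    rw [← sum_union (hdisj.mono inter_subset_right inter_subset_right),
      ← inter_union_distrib_left, hunion, inter_univ]
  rw [sum_sum_compl_of_glue hdisj hw, eq_sub_of_add_eq (sum_compl_add_sum I d),
    Int.sub_emod_of_dvd hdiv, hI]
  refine le_trans (Int.cast_le.2 (Int.emod_mul_neg_emod_add_le (by omega) _ _)) ?_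
  rw [Int.cast_add]
  exact add_le_add (emod_mul_neg_emod_le_sum_sum_sdiff d w₁ hS₁ h₁ I)
    (emod_mul_neg_emod_le_sum_sum_sdiff d w₂ hS₂ h₂ I)

/-- Gluing weightings along an `m`-partition `S₁ ⊔ S₂ = [n]`: let `w` be the weighting equal
to `w₁` on edges inside `S₁`, `w₂` on edges inside `S₂`, and `0` on the crossing edges. If
for every partition of `Sₜ` into two nonempty pieces `I ⊔ J` the `wₜ`-flow across it is at
least `⟨d(I)⟩_m ⟨d(J)⟩_m`, and `m ∣ d(S₁)` (and `m` divides the total degree), then the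
`w`-flow across every partition `I ⊔ Iᶜ` of `[n]` is at least `⟨d(I)⟩_m ⟨d(Iᶜ)⟩_m`. -/
theorem glued_weighting_flow {n : ℕ} (m : ℕ) (hm : 2 ≤ m) (d : Fin n → ℤ)
    (S₁ S₂ : Finset (Fin n)) (hdisj : Disjoint S₁ S₂) (hunion : S₁ ∪ S₂ = univ)
    (w₁ w₂ w : Fin n → Fin n → ℚ)
    (hsym₁ : ∀ i j, w₁ i j = w₁ j i) (hsym₂ : ∀ i j, w₂ i j = w₂ j i)
    (hw : ∀ i j, w i j =
      if i ∈ S₁ ∧ j ∈ S₁ then w₁ i j else if i ∈ S₂ ∧ j ∈ S₂ then w₂ i j else 0)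
    (h₁ : ∀ I : Finset (Fin n), I ⊆ S₁ → I.Nonempty → (S₁ \ I).Nonempty →
      ∑ i ∈ I, ∑ j ∈ S₁ \ I, w₁ i j ≥
        ((((∑ i ∈ I, d i) % (m : ℤ)) * ((∑ j ∈ S₁ \ I, d j) % (m : ℤ)) : ℤ) : ℚ))
    (h₂ : ∀ I : Finset (Fin n), I ⊆ S₂ → I.Nonempty → (S₂ \ I).Nonempty →
      ∑ i ∈ I, ∑ j ∈ S₂ \ I, w₂ i j ≥
        ((((∑ i ∈ I, d i) % (m : ℤ)) * ((∑ j ∈ S₂ \ I, d j) % (m : ℤ)) : ℤ) : ℚ))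
    (hdiv : (m : ℤ) ∣ ∑ i, d i) (hS₁ : (m : ℤ) ∣ ∑ i ∈ S₁, d i) :
    ∀ I : Finset (Fin n),
      ∑ i ∈ I, ∑ j ∈ Iᶜ, w i j ≥
        ((((∑ i ∈ I, d i) % (m : ℤ)) * ((∑ j ∈ Iᶜ, d j) % (m : ℤ)) : ℤ) : ℚ) :=
  glued_weighting_flow_general m hm d S₁ S₂ hdisj hunion w₁ w₂ w hw h₁ h₂ hdiv hS₁
end
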